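/- arXiv:1905.03222 — 7 statements merged into one kernel-verified Lean document; each statement's English description precedes it below -/
import Mathlib

section
/- Let α ∈ (0, 1) and let Z_1, …, Z_{n+1} be exchangeable real-valued random variables. Let k = ⌈(1−α)(n+1)⌉. If k ≤ n, let Q̂ denote the k-th smallest value among Z_1, …, Z_n; then P(Z_{n+1} ≤ Q̂) ≥ 1 − α. (If k > n, the inflated empirical quantile is +∞ and the bound holds trivially.) -/
open MeasureTheory Finset ENNReal

/-- A finite family of random variables is exchangeable if its joint distribution is invariant
under every permutation of the indices. -/
def Exchangeable {Ω α : Type*} [MeasurableSpace Ω] [MeasurableSpace α]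
    (μ : Measure Ω) {n : ℕ} (Z : Fin n → Ω → α) : Prop :=
  ∀ σ : Equiv.Perm (Fin n),
    Measure.map (fun ω (i : Fin n) => Z (σ i) ω) μ = Measure.map (fun ω (i : Fin n) => Z i ω) μ

/-- The `k`-th order statistic (the `k`-th smallest value, `1 ≤ k ≤ n`) of `w : Fin n → ℝ`,
obtained by sorting the values in nondecreasing order. Junk value `0` when `k - 1 ≥ n`. -/
noncomputable def orderStat {n : ℕ} (w : Fin n → ℝ) (k : ℕ) : ℝ :=
  if h : k - 1 < n then (w ∘ Tuple.sort w) ⟨k - 1, h⟩ else 0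

lemma le_orderStat_of_card_lt {n : ℕ} (w : Fin n → ℝ) {k : ℕ} (hk1 : 1 ≤ k) (hkn : k ≤ n)
    (z : ℝ) (h : (univ.filter fun i => w i < z).card < k) : z ≤ orderStat w k := by
  by_contra hlt
  push_neg at hlt
  have hkn' : k - 1 < n := by omega
  rw [orderStat, dif_pos hkn'] at hlt
  set g : Fin k → Fin n := fun p => Tuple.sort w (Fin.castLE hkn p) with hg
  have hginj : Function.Injective g :=
    (Tuple.sort w).injective.comp (Fin.castLE_injective hkn)
  have hsub : Finset.image g univ ⊆ univ.filter fun i => w i < z := by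
    intro i hi
    simp only [Finset.mem_image] at hi
    obtain ⟨p, -, rfl⟩ := hi
    simp only [Finset.mem_filter, Finset.mem_univ, true_and]
    calc w (g p) ≤ (w ∘ Tuple.sort w) ⟨k - 1, hkn'⟩ := by
          apply Tuple.monotone_sort w
          simpa [Fin.le_def] using by omega
      _ < z := hlt
  have := Finset.card_le_card hsub
  rw [Finset.card_image_of_injective _ hginj, Finset.card_univ, Fintype.card_fin] at this
  omega

lemma card_filter_comp_equiv {m : Type*} [Fintype m] [DecidableEq m] (e : Equiv.Perm m)
    (P : m → Prop) [DecidablePred P] :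
    (univ.filter fun q => P (e q)).card = (univ.filter P).card := by
  have : univ.filter P = Finset.image e (univ.filter fun q => P (e q)) := by
    ext j
    simp only [Finset.mem_filter, Finset.mem_univ, true_and, Finset.mem_image]
    constructor
    · intro hj; exact ⟨e.symm j, by simpa using hj, by simp⟩
    · rintro ⟨q, hq, rfl⟩; exact hq
  rw [this, Finset.card_image_of_injective _ e.injective]

lemma card_rank_lt {m : ℕ} (z : Fin m → ℝ) {k : ℕ} (hk : k ≤ m) :
    k ≤ (univ.filter fun j => (univ.filter fun i => z i < z j).card < k).card := by
  set τ := Tuple.sort z with hτ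
  set g : Fin k → Fin m := fun p => τ (Fin.castLE hk p) with hg
  have hginj : Function.Injective g := τ.injective.comp (Fin.castLE_injective hk)
  have hsub : Finset.image g univ ⊆
      univ.filter fun j => (univ.filter fun i => z i < z j).card < k := by
    intro j hj
    simp only [Finset.mem_image] at hj
    obtain ⟨p, -, rfl⟩ := hj
    simp only [Finset.mem_filter, Finset.mem_univ, true_and]
    have hre : (univ.filter fun i => z i < z (g p)).card
        = (univ.filter fun q => z (τ q) < z (g p)).card :=
      (card_filter_comp_equiv τ (fun i => z i < z (g p))).symm
    rw [hre]
    have hsub2 : (univ.filter fun q => z (τ q) < z (g p)) ⊆ Finset.Iio (Fin.castLE hk p) := by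
      intro q hq
      simp only [Finset.mem_filter, Finset.mem_univ, true_and] at hq
      simp only [Finset.mem_Iio]
      by_contra hq2
      push_neg at hq2
      exact absurd (Tuple.monotone_sort z hq2) (by simpa [hg] using not_le.mpr hq)
    calc (univ.filter fun q => z (τ q) < z (g p)).card
        ≤ (Finset.Iio (Fin.castLE hk p)).card := Finset.card_le_card hsub2
      _ = p := by simp
      _ < k := p.isLt
  have := Finset.card_le_card hsub
  rwa [Finset.card_image_of_injective _ hginj, Finset.card_univ, Fintype.card_fin] at this

/-- Quantile-inflation lemma, lower bound: if `Z 1, …, Z (n+1)` are exchangeable,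
`α ∈ (0,1)`, `k = ⌈(1-α)(n+1)⌉ ≤ n` and `Q̂` is the `k`-th smallest value among
`Z 1, …, Z n`, then `P(Z (n+1) ≤ Q̂) ≥ 1 - α`. -/
theorem prob_le_inflated_quantile_of_exchangeable {Ω : Type*} [MeasurableSpace Ω]
    (μ : Measure Ω) [IsProbabilityMeasure μ] {n : ℕ}
    (Z : Fin (n + 1) → Ω → ℝ) (hmeas : ∀ i, Measurable (Z i))
    (hexch : Exchangeable μ Z)
    (α : ℝ) (hα : α ∈ Set.Ioo (0 : ℝ) 1)
    (hk : ⌈(1 - α) * ((n : ℝ) + 1)⌉₊ ≤ n) :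
    ENNReal.ofReal (1 - α) ≤
      μ {ω | Z (Fin.last n) ω ≤
        orderStat (fun i : Fin n => Z i.castSucc ω) ⌈(1 - α) * ((n : ℝ) + 1)⌉₊} := by
  set k := ⌈(1 - α) * ((n : ℝ) + 1)⌉₊ with hkdef
  have hk1 : 1 ≤ k := by
    rw [hkdef]
    exact Nat.one_le_ceil_iff.mpr (by nlinarith [hα.1, hα.2])
  set B : Fin (n + 1) → Set Ω :=
    fun j => {ω | (univ.filter fun i => Z i ω < Z j ω).card < k} with hB
  set S : Set (Fin (n+1) → ℝ) :=
    {z | (univ.filter fun i => z i < z (Fin.last n)).card < k} with hS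
  have hSmeas : MeasurableSet S := by
    have hc : Measurable fun z : Fin (n+1) → ℝ =>
        (univ.filter fun i => z i < z (Fin.last n)).card := by
      have : (fun z : Fin (n+1) → ℝ => (univ.filter fun i => z i < z (Fin.last n)).card)
          = fun z => ∑ i, if z i < z (Fin.last n) then 1 else 0 := by
        funext z; rw [Finset.card_filter]
      rw [this]
      exact Finset.measurable_sum _ fun i _ => Measurable.ite
        (measurableSet_lt (measurable_pi_apply i) (measurable_pi_apply _))
        measurable_const measurable_const
    exact hc (measurableSet_Iio (a := k))
  have hBmeas : ∀ j, MeasurableSet (B j) := by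
    intro j
    have hc : Measurable fun ω => (univ.filter fun i => Z i ω < Z j ω).card := by
      have : (fun ω => (univ.filter fun i => Z i ω < Z j ω).card)
          = fun ω => ∑ i, if Z i ω < Z j ω then 1 else 0 := by
        funext ω; rw [Finset.card_filter]
      rw [this]
      exact Finset.measurable_sum _ fun i _ =>
        Measurable.ite (measurableSet_lt (hmeas i) (hmeas j)) measurable_const measurable_const
    exact hc (measurableSet_Iio (a := k))
  -- all B j have equal measure by exchangeability
  have hBeq : ∀ j, μ (B j) = μ (B (Fin.last n)) := by
    intro j
    set σ := Equiv.swap j (Fin.last n) with hσ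
    have hpre : (fun ω (i : Fin (n+1)) => Z (σ i) ω) ⁻¹' S = B j := by
      ext ω
      simp only [Set.mem_preimage, hS, Set.mem_setOf_eq, hB]
      simp only [hσ, Equiv.swap_apply_right]
      rw [card_filter_comp_equiv (Equiv.swap j (Fin.last n)) (fun i => Z i ω < Z j ω)]
    have hpre2 : (fun ω (i : Fin (n+1)) => Z i ω) ⁻¹' S = B (Fin.last n) := rfl
    have hmσ : Measurable fun ω (i : Fin (n+1)) => Z (σ i) ω :=
      measurable_pi_lambda _ fun i => hmeas _
    have hm1 : Measurable fun ω (i : Fin (n+1)) => Z i ω :=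
      measurable_pi_lambda _ fun i => hmeas _
    calc μ (B j) = Measure.map (fun ω (i : Fin (n+1)) => Z (σ i) ω) μ S := by
          rw [Measure.map_apply hmσ hSmeas, hpre]
      _ = Measure.map (fun ω (i : Fin (n+1)) => Z i ω) μ S := by rw [hexch σ]
      _ = μ (B (Fin.last n)) := by rw [Measure.map_apply hm1 hSmeas, hpre2]
  -- pointwise: at least k of the events hold
  have hpoint : ∀ ω, (k : ℝ≥0∞) ≤ ∑ j, Set.indicator (B j) (fun _ => (1 : ℝ≥0∞)) ω := by
    intro ω
    have hcard := card_rank_lt (fun i => Z i ω) (show k ≤ n + 1 by omega)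
    have heq : ∑ j, Set.indicator (B j) (fun _ => (1 : ℝ≥0∞)) ω
        = ((univ.filter fun j => ω ∈ B j).card : ℝ≥0∞) := by
      rw [Finset.card_filter, Nat.cast_sum]
      refine Finset.sum_congr rfl fun j _ => ?_
      by_cases hj : ω ∈ B j <;> simp [Set.indicator_apply, hj]
    rw [heq]
    exact_mod_cast hcard
  -- integrate
  have hsum : (k : ℝ≥0∞) ≤ ∑ j, μ (B j) := by
    have h1 : ∑ j, μ (B j) = ∫⁻ ω, ∑ j, Set.indicator (B j) (fun _ => (1 : ℝ≥0∞)) ω ∂μ := by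
      rw [lintegral_finset_sum _ fun j _ => (measurable_const (a := (1:ℝ≥0∞))).indicator (hBmeas j)]
      refine Finset.sum_congr rfl fun j _ => ?_
      rw [lintegral_indicator_const (hBmeas j) 1, one_mul]
    calc (k : ℝ≥0∞) = ∫⁻ _, (k : ℝ≥0∞) ∂μ := by simp
      _ ≤ ∫⁻ ω, ∑ j, Set.indicator (B j) (fun _ => (1 : ℝ≥0∞)) ω ∂μ := lintegral_mono hpoint
      _ = ∑ j, μ (B j) := h1.symm
  have hsum2 : (k : ℝ≥0∞) ≤ (n + 1 : ℝ≥0∞) * μ (B (Fin.last n)) := by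
    calc (k : ℝ≥0∞) ≤ ∑ j, μ (B j) := hsum
      _ = ∑ _j : Fin (n+1), μ (B (Fin.last n)) := Finset.sum_congr rfl fun j _ => hBeq j
      _ = (n + 1 : ℝ≥0∞) * μ (B (Fin.last n)) := by
          rw [Finset.sum_const, Finset.card_univ, Fintype.card_fin, nsmul_eq_mul]
          push_cast
          ring
  have hdiv : (k : ℝ≥0∞) / (n + 1 : ℝ≥0∞) ≤ μ (B (Fin.last n)) := by
    rw [ENNReal.div_le_iff (by simp) (by simp)]
    rwa [mul_comm] at hsum2
  have hofreal : ENNReal.ofReal (1 - α) ≤ (k : ℝ≥0∞) / (n + 1 : ℝ≥0∞) := by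
    have h1 : (1 - α) ≤ (k : ℝ) / ((n : ℝ) + 1) := by
      rw [le_div_iff₀ (by positivity)]
      calc (1 - α) * ((n : ℝ) + 1) ≤ (k : ℝ) := Nat.le_ceil _
        _ = (k : ℝ) := rfl
    calc ENNReal.ofReal (1 - α) ≤ ENNReal.ofReal ((k : ℝ) / ((n : ℝ) + 1)) :=
          ENNReal.ofReal_le_ofReal h1
      _ = (k : ℝ≥0∞) / (n + 1 : ℝ≥0∞) := by
          rw [ENNReal.ofReal_div_of_pos (by positivity)]
          congr 1
          · exact ENNReal.ofReal_natCast k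
          · rw [show ((n : ℝ) + 1) = ((n + 1 : ℕ) : ℝ) by push_cast; ring,
              ENNReal.ofReal_natCast]
            push_cast; ring
  -- B (last) is contained in the target event
  have hincl : B (Fin.last n) ⊆ {ω | Z (Fin.last n) ω ≤
      orderStat (fun i : Fin n => Z i.castSucc ω) k} := by
    intro ω hω
    simp only [hB, Set.mem_setOf_eq] at hω
    have hcards : (univ.filter fun i : Fin n => Z i.castSucc ω < Z (Fin.last n) ω).card
        = (univ.filter fun i : Fin (n+1) => Z i ω < Z (Fin.last n) ω).card := by
      rw [Finset.card_filter, Finset.card_filter, Fin.sum_univ_castSucc]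
      simp
    have : (univ.filter fun i : Fin n => Z i.castSucc ω < Z (Fin.last n) ω).card < k := by
      rw [hcards]; exact hω
    exact le_orderStat_of_card_lt _ hk1 hk _ this
  calc ENNReal.ofReal (1 - α) ≤ μ (B (Fin.last n)) := le_trans hofreal hdiv
    _ ≤ _ := measure_mono hincl
end

section
/- Let α ∈ (0, 1) and let Z_1, …, Z_{n+1} be exchangeable real-valued random variables that are almost surely pairwise distinct. Let k = ⌈(1−α)(n+1)⌉ and suppose k ≤ n, and let Q̂ denote the k-th smallest value among Z_1, …, Z_n. Then P(Z_{n+1} ≤ Q̂) ≤ 1 − α + 1/(n+1). -/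
open MeasureTheory

section Aux
open Finset

/-- rank of coordinate `i`: number of coordinates `j` with `v j ≤ v i`. -/
noncomputable def rnk {N : ℕ} (v : Fin N → ℝ) (i : Fin N) : ℕ :=
  (univ.filter (fun j => v j ≤ v i)).card

lemma card_filter_perm {N : ℕ} (σ : Equiv.Perm (Fin N)) (p : Fin N → Prop) [DecidablePred p] :
    (univ.filter fun j => p (σ j)).card = (univ.filter p).card := by
  apply Finset.card_bij (fun a _ => σ a)
  · intro a ha; simp only [mem_filter, mem_univ, true_and] at ha ⊢; exact ha
  · intro a _ b _ h; exact σ.injective h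
  · intro b hb
    refine ⟨σ.symm b, ?_, by simp⟩
    simp only [mem_filter, mem_univ, true_and, Equiv.apply_symm_apply] at hb ⊢
    exact hb

lemma rnk_comp_perm {N : ℕ} (σ : Equiv.Perm (Fin N)) (v : Fin N → ℝ) (i : Fin N) :
    rnk (fun j => v (σ j)) i = rnk v (σ i) := by
  classical
  exact card_filter_perm σ (fun j => v j ≤ v (σ i))

lemma strictMono_le_iff_card {N : ℕ} {g : Fin N → ℝ} (hg : StrictMono g) (m : Fin N) (t : ℝ) :
    t ≤ g m ↔ (univ.filter fun j => g j < t).card ≤ m.val := by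
  classical
  constructor
  · intro h
    calc (univ.filter fun j => g j < t).card ≤ (Finset.Iio m).card := by
          apply Finset.card_le_card
          intro j hj
          simp only [mem_filter, mem_univ, true_and] at hj
          exact Finset.mem_Iio.2 (hg.lt_iff_lt.1 (lt_of_lt_of_le hj h))
      _ = m.val := Fin.card_Iio m
  · intro h
    by_contra hlt
    push_neg at hlt
    have hsub : Finset.Iic m ⊆ univ.filter fun j => g j < t := by
      intro j hj
      simp only [mem_filter, mem_univ, true_and]
      exact lt_of_le_of_lt (hg.monotone (Finset.mem_Iic.1 hj)) hlt
    have := Finset.card_le_card hsub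
    rw [Fin.card_Iic] at this
    omega

lemma rnk_last {n : ℕ} (v : Fin (n+1) → ℝ)
    (hv : ∀ i : Fin n, v i.castSucc ≠ v (Fin.last n)) :
    rnk v (Fin.last n)
      = (univ.filter fun i : Fin n => v i.castSucc < v (Fin.last n)).card + 1 := by
  classical
  unfold rnk
  rw [Finset.card_filter, Finset.card_filter, Fin.sum_univ_castSucc]
  simp only [le_refl, if_true]
  congr 1
  apply Finset.sum_congr rfl
  intro i _
  by_cases h : v i.castSucc < v (Fin.last n)
  · rw [if_pos h.le, if_pos h]
  · rw [if_neg (fun hle => h (lt_of_le_of_ne hle (hv i))), if_neg h]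

lemma key_iff {n : ℕ} {v : Fin (n+1) → ℝ} (hv : Function.Injective v) {k : ℕ}
    (hk1 : 1 ≤ k) (hkn : k ≤ n) :
    v (Fin.last n) ≤ orderStat (fun i : Fin n => v i.castSucc) k ↔
      rnk v (Fin.last n) ≤ k := by
  classical
  set w : Fin n → ℝ := fun i => v i.castSucc with hw'
  have hw : Function.Injective w := fun a b h => by
    have := hv h
    exact Fin.castSucc_injective n this
  have hkn' : k - 1 < n := by omega
  have hg : StrictMono (w ∘ Tuple.sort w) :=
    (Tuple.monotone_sort w).strictMono_of_injective (hw.comp (Tuple.sort w).injective)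
  rw [orderStat, dif_pos hkn']
  rw [rnk_last v (fun i h => by
    have := hv h
    simp only [Fin.ext_iff, Fin.coe_castSucc, Fin.val_last] at this
    omega)]
  rw [strictMono_le_iff_card hg ⟨k-1, hkn'⟩ (v (Fin.last n))]
  have : (univ.filter fun j => (w ∘ Tuple.sort w) j < v (Fin.last n)).card
      = (univ.filter fun i : Fin n => w i < v (Fin.last n)).card :=
    card_filter_perm (Tuple.sort w) (fun j => w j < v (Fin.last n))
  rw [this]
  have h2 : (univ.filter fun i : Fin n => w i < v (Fin.last n))
      = (univ.filter fun i : Fin n => v i.castSucc < v (Fin.last n)) := rfl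
  rw [h2]
  simp only [Fin.val_mk]
  omega

lemma card_rank_le {n : ℕ} {v : Fin (n+1) → ℝ} (hv : Function.Injective v) {k : ℕ}
    (hkn : k ≤ n) :
    (univ.filter fun i => rnk v i ≤ k).card = k := by
  classical
  have hg : StrictMono (v ∘ Tuple.sort v) :=
    (Tuple.monotone_sort v).strictMono_of_injective (hv.comp (Tuple.sort v).injective)
  rw [← card_filter_perm (Tuple.sort v) (fun i => rnk v i ≤ k)]
  have hr : ∀ m : Fin (n+1), rnk v (Tuple.sort v m) = m.val + 1 := by
    intro m
    unfold rnk
    have h1 : (univ.filter fun j => v (Tuple.sort v j) ≤ v (Tuple.sort v m)).card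
        = (univ.filter fun j => v j ≤ v (Tuple.sort v m)).card :=
      card_filter_perm (Tuple.sort v) (fun j => v j ≤ v (Tuple.sort v m))
    rw [← h1]
    have h2 : (univ.filter fun j => v (Tuple.sort v j) ≤ v (Tuple.sort v m)) = Finset.Iic m := by
      ext j
      simp only [mem_filter, mem_univ, true_and, Finset.mem_Iic]
      exact ⟨fun h => hg.le_iff_le.mp h, fun h => hg.monotone h⟩
    rw [h2, Fin.card_Iic]
  have h3 : (univ.filter fun m => rnk v (Tuple.sort v m) ≤ k)
      = Finset.Iio (⟨k, by omega⟩ : Fin (n+1)) := by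
    ext m
    simp only [mem_filter, mem_univ, true_and, Finset.mem_Iio, hr m, Fin.lt_def]
    omega
  rw [h3, Fin.card_Iio]

lemma measurableSet_rnk_le {N : ℕ} (i : Fin N) (k : ℕ) :
    MeasurableSet {v : Fin N → ℝ | rnk v i ≤ k} := by
  classical
  have hm : Measurable fun v : Fin N → ℝ => rnk v i := by
    have h : (fun v : Fin N → ℝ => rnk v i)
        = fun v => ∑ j, if v j ≤ v i then 1 else 0 := by
      funext v; exact Finset.card_filter _ _
    rw [h]
    exact Finset.measurable_sum _ (fun j _ =>
      Measurable.ite (measurableSet_le (measurable_pi_apply j) (measurable_pi_apply i))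
        measurable_const measurable_const)
  have h2 : {v : Fin N → ℝ | rnk v i ≤ k} = (fun v => rnk v i) ⁻¹' (Set.Iic k) := rfl
  rw [h2]
  exact hm measurableSet_Iic

end Aux

open Finset ENNReal in
/-- Quantile-inflation lemma, upper bound: if `Z 1, …, Z (n+1)` are exchangeable and almost
surely pairwise distinct, `α ∈ (0,1)`, `k = ⌈(1-α)(n+1)⌉ ≤ n` and `Q̂` is the `k`-th smallest
value among `Z 1, …, Z n`, then `P(Z (n+1) ≤ Q̂) ≤ 1 - α + 1/(n+1)`. -/
theorem prob_le_inflated_quantile_upper_of_exchangeable {Ω : Type*} [MeasurableSpace Ω]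
    (μ : Measure Ω) [IsProbabilityMeasure μ] {n : ℕ}
    (Z : Fin (n + 1) → Ω → ℝ) (hmeas : ∀ i, Measurable (Z i))
    (hexch : Exchangeable μ Z)
    (hdist : ∀ᵐ ω ∂μ, ∀ i j : Fin (n + 1), i ≠ j → Z i ω ≠ Z j ω)
    (α : ℝ) (hα : α ∈ Set.Ioo (0 : ℝ) 1)
    (hk : ⌈(1 - α) * ((n : ℝ) + 1)⌉₊ ≤ n) :
    μ {ω | Z (Fin.last n) ω ≤
        orderStat (fun i : Fin n => Z i.castSucc ω) ⌈(1 - α) * ((n : ℝ) + 1)⌉₊} ≤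
      ENNReal.ofReal (1 - α + 1 / ((n : ℝ) + 1)) := by
  classical
  obtain ⟨hα0, hα1⟩ := hα
  set k := ⌈(1 - α) * ((n : ℝ) + 1)⌉₊ with hkdef
  have hx0 : (0 : ℝ) < (1 - α) * ((n : ℝ) + 1) := by
    have h1 : (0:ℝ) < 1 - α := by linarith
    positivity
  have hkpos : 1 ≤ k := Nat.ceil_pos.mpr hx0
  set C : Fin (n+1) → Set Ω := fun i => {ω | rnk (fun j => Z j ω) i ≤ k} with hC
  have hZM : Measurable fun ω => (fun j => Z j ω) := measurable_pi_lambda _ hmeas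
  have hCm : ∀ i, MeasurableSet (C i) := fun i => hZM (measurableSet_rnk_le i k)
  -- all C i have the same measure, by exchangeability
  have hCeq : ∀ i, μ (C i) = μ (C (Fin.last n)) := by
    intro i
    set σ : Equiv.Perm (Fin (n+1)) := Equiv.swap i (Fin.last n) with hσ
    have hZσ : Measurable fun ω => (fun j : Fin (n+1) => Z (σ j) ω) :=
      measurable_pi_lambda _ (fun j => hmeas (σ j))
    have h1 : Measure.map (fun ω (j : Fin (n+1)) => Z j ω) μ {v | rnk v i ≤ k} = μ (C i) := by
      rw [Measure.map_apply hZM (measurableSet_rnk_le i k)]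
      rfl
    have h2 : Measure.map (fun ω (j : Fin (n+1)) => Z (σ j) ω) μ {v | rnk v i ≤ k}
        = μ (C (Fin.last n)) := by
      rw [Measure.map_apply hZσ (measurableSet_rnk_le i k)]
      have hpre : (fun ω (j : Fin (n+1)) => Z (σ j) ω) ⁻¹' {v | rnk v i ≤ k}
          = C (Fin.last n) := by
        ext ω
        have := rnk_comp_perm σ (fun j => Z j ω) i
        simp only [Set.mem_preimage, Set.mem_setOf_eq, hC]
        rw [this, hσ, Equiv.swap_apply_left]
      rw [hpre]
    rw [← h1, ← h2, hexch σ]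
  -- sum of measures equals k
  have hinj : ∀ᵐ ω ∂μ, Function.Injective (fun j => Z j ω) := by
    filter_upwards [hdist] with ω hω
    intro a b hab
    by_contra hne
    exact hω a b hne hab
  have hsum : ∑ i : Fin (n+1), μ (C i) = (k : ℝ≥0∞) := by
    have h1 : ∀ i : Fin (n+1), μ (C i) = ∫⁻ ω, (C i).indicator (fun _ => (1:ℝ≥0∞)) ω ∂μ := by
      intro i
      rw [lintegral_indicator (hCm i)]
      simp
    calc ∑ i : Fin (n+1), μ (C i)
        = ∑ i : Fin (n+1), ∫⁻ ω, (C i).indicator (fun _ => (1:ℝ≥0∞)) ω ∂μ := by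
          exact Finset.sum_congr rfl (fun i _ => h1 i)
      _ = ∫⁻ ω, ∑ i : Fin (n+1), (C i).indicator (fun _ => (1:ℝ≥0∞)) ω ∂μ := by
          rw [lintegral_finset_sum]
          intro i _
          exact measurable_const.indicator (hCm i)
      _ = ∫⁻ _, (k : ℝ≥0∞) ∂μ := by
          apply lintegral_congr_ae
          filter_upwards [hinj] with ω hω
          have hcard := card_rank_le hω hk
          calc ∑ i : Fin (n+1), (C i).indicator (fun _ => (1:ℝ≥0∞)) ω
              = ∑ i : Fin (n+1), if ω ∈ C i then (1:ℝ≥0∞) else 0 := by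
                exact Finset.sum_congr rfl (fun i _ => Set.indicator_apply _ _ _)
            _ = ((Finset.univ.filter fun i : Fin (n+1) => ω ∈ C i).card : ℝ≥0∞) := by
                rw [Finset.card_filter]
                push_cast
                exact Finset.sum_congr rfl (fun i _ => by split <;> simp)
            _ = (k : ℝ≥0∞) := by
                norm_cast
      _ = (k : ℝ≥0∞) := by simp
  have hlast : μ (C (Fin.last n)) = (k : ℝ≥0∞) / ((n : ℝ≥0∞) + 1) := by
    have h1 : ∑ i : Fin (n+1), μ (C i) = ((n : ℝ≥0∞) + 1) * μ (C (Fin.last n)) := by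
      rw [Finset.sum_congr rfl (fun i _ => hCeq i), Finset.sum_const, Finset.card_univ,
        Fintype.card_fin, nsmul_eq_mul]
      push_cast
      ring
    rw [h1] at hsum
    rw [ENNReal.eq_div_iff (by simp) (by simp)]
    exact hsum
  have hmain : μ {ω | Z (Fin.last n) ω ≤
      orderStat (fun i : Fin n => Z i.castSucc ω) k} = μ (C (Fin.last n)) := by
    apply measure_congr
    rw [Filter.eventuallyEq_set]
    filter_upwards [hinj] with ω hω
    exact key_iff hω hkpos hk
  rw [hmain, hlast]
  -- final arithmetic
  have hreal : (k : ℝ) / ((n : ℝ) + 1) ≤ 1 - α + 1 / ((n : ℝ) + 1) := by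
    have hceil : (k : ℝ) < (1 - α) * ((n : ℝ) + 1) + 1 :=
      Nat.ceil_lt_add_one hx0.le
    rw [div_le_iff₀ (by positivity)]
    have hn1 : (0:ℝ) < (n : ℝ) + 1 := by positivity
    field_simp
    nlinarith
  calc (k : ℝ≥0∞) / ((n : ℝ≥0∞) + 1)
      = ENNReal.ofReal ((k : ℝ) / ((n : ℝ) + 1)) := by
        rw [ENNReal.ofReal_div_of_pos (by positivity)]
        congr 1
        · exact (ENNReal.ofReal_natCast k).symm
        · rw [ENNReal.ofReal_add (by positivity) (by norm_num)]
          simp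
    _ ≤ ENNReal.ofReal (1 - α + 1 / ((n : ℝ) + 1)) := ENNReal.ofReal_le_ofReal hreal
end

section
/- Let α ∈ (0, 1), let q_lo, q_hi : ℝ^p → ℝ be measurable functions, and let (X_1, Y_1), …, (X_{m+1}, Y_{m+1}) be exchangeable random variables in ℝ^p × ℝ. Define the conformity scores E_i = max(q_lo(X_i) − Y_i, Y_i − q_hi(X_i)) for i = 1, …, m+1, and let Q_{1−α} denote the ⌈(1−α)(m+1)⌉-th smallest value among E_1, …, E_m (equal to +∞ if ⌈(1−α)(m+1)⌉ > m). Then P( q_lo(X_{m+1}) − Q_{1−α} ≤ Y_{m+1} ≤ q_hi(X_{m+1}) + Q_{1−α} ) ≥ 1 − α. -/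
/-!
Coverage of the test point means exactly that its score `E (m+1)` is at most the `k`-th smallest
calibration score, `k = ⌈(1-α)(m+1)⌉`, i.e. that fewer than `k` of the `m + 1` scores lie strictly
below it. For any vector of `m + 1` reals at least `k` of its entries have this property, and by
exchangeability all `m + 1` entries have it with the same probability; hence the test score has it
with probability at least `k / (m + 1) ≥ 1 - α`.
-/

open MeasureTheory

/-- The `k`-th order statistic (the `k`-th smallest value, `1 ≤ k ≤ n`) of `w : Fin n → ℝ`,
viewed in the extended reals, with the convention that it equals `+∞` when `k - 1 ≥ n`. -/
noncomputable def orderStatE {n : ℕ} (w : Fin n → ℝ) (k : ℕ) : EReal :=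
  if h : k - 1 < n then ((w ∘ Tuple.sort w) ⟨k - 1, h⟩ : EReal) else ⊤

open Finset
open scoped ENNReal

def strictRank {ι α : Type*} [Fintype ι] [LinearOrder α] (v : ι → α) (j : ι) : ℕ :=
  #{i | v i < v j}

lemma card_filter_comp_equiv_s8 {ι κ : Type*} [Fintype ι] [Fintype κ] (e : ι ≃ κ) (p : κ → Prop)
    [DecidablePred p] : #{i | p (e i)} = #{i | p i} :=
  card_equiv e (by simp)

section StrictRank

variable {α : Type*} [LinearOrder α] {n : ℕ}

lemma strictRank_comp_equiv {ι κ : Type*} [Fintype ι] [Fintype κ] (v : ι → α) (e : κ ≃ ι)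
    (j : κ) : strictRank (v ∘ e) j = strictRank v (e j) :=
  card_filter_comp_equiv_s8 e fun i => v i < v (e j)

lemma strictRank_last (v : Fin (n + 1) → α) :
    strictRank v (Fin.last n) = #{i : Fin n | v i.castSucc < v (Fin.last n)} := by
  rw [strictRank, card_filter, card_filter, Fin.sum_univ_castSucc]
  simp

lemma card_filter_lt_le_iff (v : Fin n → α) (r : Fin n) (c : α) :
    #{i | v i < c} ≤ r ↔ c ≤ v (Tuple.sort v r) := by
  have hmono := Tuple.monotone_sort v
  rw [← card_filter_comp_equiv_s8 (Tuple.sort v)]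
  constructor
  · intro h
    by_contra! hc
    have hsub : Iic r ⊆ univ.filter fun s => v (Tuple.sort v s) < c := fun s hs => by
      simpa using (hmono (mem_Iic.1 hs)).trans_lt hc
    have := (card_le_card hsub).trans h
    simp at this
  · intro hc
    have hsub : univ.filter (fun s => v (Tuple.sort v s) < c) ⊆ Iio r := fun s hs => by
      simp only [mem_filter, mem_univ, true_and, mem_Iio] at hs ⊢
      by_contra! hrs
      exact (hc.trans (hmono hrs)).not_gt hs
    simpa using card_le_card hsub

/-- The entries in the first `k` sorted positions all have strict rank below `k`. -/
lemma le_card_strictRank_lt (v : Fin n → α) {k : ℕ} (hk : k ≤ n) :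
    k ≤ #{j | strictRank v j < k} := by
  have hsub : (univ : Finset (Fin k)).map ((Fin.castLEEmb hk).trans (Tuple.sort v).toEmbedding) ⊆
      univ.filter fun j => strictRank v j < k := by
    intro j hj
    obtain ⟨r, -, rfl⟩ := mem_map.1 hj
    simp only [mem_filter, mem_univ, true_and]
    exact ((card_filter_lt_le_iff v (Fin.castLE hk r) _).2 le_rfl).trans_lt r.2
  simpa using card_le_card hsub

end StrictRank

lemma le_orderStatE_iff {n : ℕ} (w : Fin n → ℝ) {k : ℕ} (hk : 1 ≤ k) (c : ℝ) :
    (c : EReal) ≤ orderStatE w k ↔ #{i | w i < c} < k := by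
  unfold orderStatE
  split_ifs with h
  · rw [EReal.coe_le_coe_iff, Function.comp_apply, ← card_filter_lt_le_iff]
    show _ ≤ k - 1 ↔ _
    omega
  · simp only [le_top, true_iff]
    exact (card_le_univ _).trans_lt (by simp; omega)

lemma EReal.coe_sub_le_and_le_coe_add_iff (lo y hi : ℝ) (q : EReal) :
    (lo : EReal) - q ≤ y ∧ (y : EReal) ≤ hi + q ↔ ((max (lo - y) (y - hi) : ℝ) : EReal) ≤ q := by
  induction q using EReal.rec with
  | bot => simp
  | top => simp
  | coe q =>
    norm_cast
    rw [max_le_iff]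
    constructor <;> rintro ⟨h₁, h₂⟩ <;> constructor <;> linarith

lemma measurableSet_strictRank_lt {ι : Type*} [Fintype ι] (j : ι) (k : ℕ) :
    MeasurableSet {v : ι → ℝ | strictRank v j < k} := by
  have : Measurable fun v : ι → ℝ => strictRank v j := by
    simp only [strictRank, card_filter]
    exact Finset.measurable_sum _ fun i _ => Measurable.ite
      (measurableSet_lt (measurable_pi_apply i) (measurable_pi_apply j))
      measurable_const measurable_const
  exact this measurableSet_Iio

open Classical in
lemma natCast_mul_measure_univ_le_sum_measure {Ω ι : Type*} [MeasurableSpace Ω] {μ : Measure Ω}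
    [Fintype ι] {A : ι → Set Ω} (hA : ∀ i, MeasurableSet (A i)) {k : ℕ}
    (hk : ∀ ω, k ≤ #{i | ω ∈ A i}) :
    k * μ Set.univ ≤ ∑ i, μ (A i) := by
  calc (k : ℝ≥0∞) * μ Set.univ = ∫⁻ _, (k : ℝ≥0∞) ∂μ := (lintegral_const _).symm
    _ ≤ ∫⁻ ω, ∑ i, (A i).indicator 1 ω ∂μ := lintegral_mono fun ω => by
        simpa [Set.indicator_apply, sum_boole] using hk ω
    _ = ∑ i, μ (A i) := by
        rw [lintegral_finsetSum _ fun i _ => measurable_one.indicator (hA i)]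
        simp [lintegral_indicator_one (hA _)]

namespace Exchangeable

variable {Ω α : Type*} [MeasurableSpace Ω] [MeasurableSpace α] {μ : Measure Ω} {n : ℕ}

lemma comp {β : Type*} [MeasurableSpace β] {Z : Fin n → Ω → α} (hZ : Exchangeable μ Z)
    (hmeas : ∀ i, Measurable (Z i)) {f : α → β} (hf : Measurable f) :
    Exchangeable μ fun i ω => f (Z i ω) := by
  intro σ
  change Measure.map ((fun (v : Fin n → α) i => f (v i)) ∘ fun ω i => Z (σ i) ω) μ =
    Measure.map ((fun (v : Fin n → α) i => f (v i)) ∘ fun ω i => Z i ω) μ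
  have hF : Measurable fun (v : Fin n → α) i => f (v i) :=
    measurable_pi_lambda _ fun i => hf.comp (measurable_pi_apply i)
  rw [← Measure.map_map hF (measurable_pi_lambda _ fun i => hmeas (σ i)), hZ σ,
    Measure.map_map hF (measurable_pi_lambda _ hmeas)]

lemma measure_preimage_perm {Z : Fin n → Ω → α} (hZ : Exchangeable μ Z)
    (hmeas : ∀ i, Measurable (Z i)) (σ : Equiv.Perm (Fin n)) {S : Set (Fin n → α)}
    (hS : MeasurableSet S) :
    μ ((fun ω i => Z (σ i) ω) ⁻¹' S) = μ ((fun ω i => Z i ω) ⁻¹' S) := by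
  rw [← Measure.map_apply (measurable_pi_lambda _ fun i => hmeas (σ i)) hS, hZ σ,
    Measure.map_apply (measurable_pi_lambda _ hmeas) hS]

variable {W : Fin n → Ω → ℝ}

lemma measure_strictRank_lt_eq (hW : Exchangeable μ W) (hmeas : ∀ i, Measurable (W i))
    (k : ℕ) (j j' : Fin n) :
    μ {ω | strictRank (fun i => W i ω) j < k} = μ {ω | strictRank (fun i => W i ω) j' < k} := by
  have hswap : {ω | strictRank (fun i => W i ω) j < k} =
      (fun ω i => W (Equiv.swap j j' i) ω) ⁻¹' {v | strictRank v j' < k} := by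
    ext ω
    change _ < k ↔ strictRank ((fun i => W i ω) ∘ Equiv.swap j j') j' < k
    rw [strictRank_comp_equiv, Equiv.swap_apply_right]
  rw [hswap, hW.measure_preimage_perm hmeas _ (measurableSet_strictRank_lt j' k)]
  rfl

theorem natCast_le_mul_measure_strictRank_lt [IsProbabilityMeasure μ] (hW : Exchangeable μ W)
    (hmeas : ∀ i, Measurable (W i)) {k : ℕ} (hk : k ≤ n) (j : Fin n) :
    (k : ℝ≥0∞) ≤ n * μ {ω | strictRank (fun i => W i ω) j < k} := by
  calc (k : ℝ≥0∞) = k * μ Set.univ := by simp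
    _ ≤ ∑ j', μ {ω | strictRank (fun i => W i ω) j' < k} :=
        natCast_mul_measure_univ_le_sum_measure
          (fun j' => measurable_pi_lambda _ hmeas (measurableSet_strictRank_lt j' k))
          fun ω => by simpa using le_card_strictRank_lt (fun i => W i ω) hk
    _ = n * μ {ω | strictRank (fun i => W i ω) j < k} := by
        simp [measure_strictRank_lt_eq hW hmeas k _ j]

end Exchangeable

/-- Coverage lower bound of Theorem 1 (validity of CQR), conditional on the proper training
set: if the pairs `(X i, Y i)`, `i = 1, …, m+1`, are exchangeable, the conformity scores are
`E i = max (q_lo (X i) - Y i) (Y i - q_hi (X i))`, and `Q_{1-α}` is the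
`⌈(1-α)(m+1)⌉`-th smallest value among `E 1, …, E m` (equal to `+∞` when the rank exceeds `m`),
then `P(q_lo (X (m+1)) - Q_{1-α} ≤ Y (m+1) ≤ q_hi (X (m+1)) + Q_{1-α}) ≥ 1 - α`. -/
theorem cqr_coverage_lower {Ω : Type*} [MeasurableSpace Ω]
    (μ : Measure Ω) [IsProbabilityMeasure μ] {m p : ℕ}
    (qlo qhi : (Fin p → ℝ) → ℝ) (hqlo : Measurable qlo) (hqhi : Measurable qhi)
    (X : Fin (m + 1) → Ω → (Fin p → ℝ)) (Y : Fin (m + 1) → Ω → ℝ)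
    (hmeas : ∀ i, Measurable fun ω => (X i ω, Y i ω))
    (hexch : Exchangeable μ fun i ω => (X i ω, Y i ω))
    (α : ℝ) (hα : α ∈ Set.Ioo (0 : ℝ) 1)
    (E : Fin (m + 1) → Ω → ℝ)
    (hE : E = fun i ω => max (qlo (X i ω) - Y i ω) (Y i ω - qhi (X i ω)))
    (Q : Ω → EReal)
    (hQ : Q = fun ω =>
      orderStatE (fun i : Fin m => E i.castSucc ω) ⌈(1 - α) * ((m : ℝ) + 1)⌉₊) :
    ENNReal.ofReal (1 - α) ≤
      μ {ω | (qlo (X (Fin.last m) ω) : EReal) - Q ω ≤ (Y (Fin.last m) ω : EReal) ∧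
             (Y (Fin.last m) ω : EReal) ≤ (qhi (X (Fin.last m) ω) : EReal) + Q ω} := by
  obtain ⟨hα0, hα1⟩ := hα
  set k := ⌈(1 - α) * ((m : ℝ) + 1)⌉₊
  have hk1 : 1 ≤ k := Nat.ceil_pos.2 (by nlinarith)
  have hkm : k ≤ m + 1 := Nat.ceil_le.2 (by push_cast; nlinarith)
  have hscore : Measurable fun z : (Fin p → ℝ) × ℝ => max (qlo z.1 - z.2) (z.2 - qhi z.1) := by
    fun_prop
  have hEexch : Exchangeable μ E := hE ▸ hexch.comp hmeas hscore
  have hEmeas : ∀ i, Measurable (E i) := fun i => hE ▸ hscore.comp (hmeas i)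
  have hcover : {ω | (qlo (X (Fin.last m) ω) : EReal) - Q ω ≤ (Y (Fin.last m) ω : EReal) ∧
      (Y (Fin.last m) ω : EReal) ≤ (qhi (X (Fin.last m) ω) : EReal) + Q ω} =
      {ω | strictRank (fun i => E i ω) (Fin.last m) < k} := by
    ext ω
    simp only [EReal.coe_sub_le_and_le_coe_add_iff, hQ,
      le_orderStatE_iff _ hk1, strictRank_last]
    simp [hE]
  have hcount := hEexch.natCast_le_mul_measure_strictRank_lt hEmeas hkm (Fin.last m)
  rw [hcover]
  calc ENNReal.ofReal (1 - α) ≤ k / (m + 1 : ℕ) := by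
        rw [ENNReal.le_div_iff_mul_le (by simp) (by simp), ← ENNReal.ofReal_natCast,
          ← ENNReal.ofReal_natCast, ← ENNReal.ofReal_mul (by linarith)]
        exact ENNReal.ofReal_le_ofReal (by push_cast; exact Nat.le_ceil _)
    _ ≤ _ := ENNReal.div_le_of_le_mul' hcount
end

section
/- Let α ∈ (0, 1), let q_lo, q_hi : ℝ^p → ℝ be measurable functions, and let (X_1, Y_1), …, (X_{m+1}, Y_{m+1}) be exchangeable random variables in ℝ^p × ℝ. Define E_i = max(q_lo(X_i) − Y_i, Y_i − q_hi(X_i)) for i = 1, …, m+1, and assume the E_i are almost surely pairwise distinct. Let k = ⌈(1−α)(m+1)⌉, assume k ≤ m, and let Q_{1−α} be the k-th smallest value among E_1, …, E_m. Then P( q_lo(X_{m+1}) − Q_{1−α} ≤ Y_{m+1} ≤ q_hi(X_{m+1}) + Q_{1−α} ) ≤ 1 − α + 1/(m+1). -/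
/-! Write `rank e i` for the number of scores strictly below `e i`. If the test point is covered,
its score is at most `Q`, and fewer than `k` calibration scores lie strictly below `Q`, so the
test point has rank `< k`. By exchangeability every index has rank `< k` with the same
probability, while almost surely distinct scores have distinct ranks, so at most `k` indices
have rank `< k`. Hence `(m + 1) P(rank < k) ≤ k`, and `k / (m + 1) ≤ 1 - α + 1 / (m + 1)`. -/

open MeasureTheory

open Finset
open scoped ENNReal

theorem card_filter_lt_orderStat_le {n : ℕ} (w : Fin n → ℝ) (k : ℕ) :
    #{i | w i < orderStat w k} ≤ k - 1 := by
  unfold orderStat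
  split_ifs with hk
  · set σ := Tuple.sort w
    have hmono : Monotone (w ∘ σ) := Tuple.monotone_sort w
    have hbelow : ∀ i, w i < (w ∘ σ) ⟨k - 1, hk⟩ → (σ.symm i : ℕ) < k - 1 := by
      intro i hi
      by_contra! hle
      have := hmono (show (⟨k - 1, hk⟩ : Fin n) ≤ σ.symm i from hle)
      simp only [Function.comp_apply, Equiv.apply_symm_apply] at this hi
      linarith
    calc #{i | w i < (w ∘ σ) ⟨k - 1, hk⟩}
        ≤ #(range (k - 1)) := card_le_card_of_injOn (fun i => (σ.symm i : ℕ))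
          (fun i hi => by simpa using hbelow i (by simpa using hi))
          (fun i _ j _ h => σ.symm.injective (Fin.val_injective h))
      _ = k - 1 := card_range _
  · calc #{i | w i < 0} ≤ #(univ : Finset (Fin n)) := card_filter_le _ _
      _ ≤ k - 1 := by simp only [card_univ, Fintype.card_fin]; omega

noncomputable def rank {ι : Type*} [Fintype ι] (e : ι → ℝ) (i : ι) : ℕ :=
  #{j | e j < e i}

section rank

variable {ι : Type*} [Fintype ι]

theorem rank_comp_perm (e : ι → ℝ) (σ : Equiv.Perm ι) (i : ι) :
    rank (e ∘ σ) i = rank e (σ i) := by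
  classical
  exact card_equiv σ fun j => by simp

theorem rank_strictMono {e : ι → ℝ} {i j : ι} (h : e i < e j) : rank e i < rank e j := by
  classical
  refine card_lt_card ⟨fun l hl => ?_, fun hsub => ?_⟩
  · simp only [mem_filter, mem_univ, true_and] at hl ⊢
    exact hl.trans h
  · simpa using hsub (show i ∈ ({l | e l < e j} : Finset ι) by simpa using h)

theorem rank_injective {e : ι → ℝ} (he : Function.Injective e) :
    Function.Injective (rank e) := by
  intro i j hij
  rcases lt_trichotomy (e i) (e j) with h | h | h
  · exact absurd hij (rank_strictMono h).ne
  · exact he h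
  · exact absurd hij (rank_strictMono h).ne'

theorem card_filter_rank_lt_le {e : ι → ℝ} (he : Function.Injective e) (k : ℕ) :
    #{i | rank e i < k} ≤ k :=
  calc #{i | rank e i < k} ≤ #(range k) :=
        card_le_card_of_injOn (rank e) (fun i hi => by simpa using hi)
          (rank_injective he).injOn
    _ = k := card_range k

end rank

theorem rank_last_lt_of_le_orderStat {m k : ℕ} (hk : 1 ≤ k) (e : Fin (m + 1) → ℝ)
    (he : e (Fin.last m) ≤ orderStat (fun i => e i.castSucc) k) : rank e (Fin.last m) < k := by
  classical
  have hsub : ({j | e j < e (Fin.last m)} : Finset (Fin (m + 1))) ⊆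
      ({i | e i.castSucc < orderStat (fun i => e i.castSucc) k} : Finset (Fin m)).map
        Fin.castSuccEmb := by
    intro j hj
    simp only [mem_filter, mem_univ, true_and] at hj
    obtain ⟨j, rfl⟩ := Fin.exists_castSucc_eq.mpr (ne_of_apply_ne e hj.ne)
    simpa using hj.trans_le he
  calc rank e (Fin.last m) ≤ _ := card_le_card hsub
    _ = _ := card_map _
    _ ≤ k - 1 := card_filter_lt_orderStat_le _ k
    _ < k := by omega

section probability

variable {Ω α : Type*} [MeasurableSpace Ω] [MeasurableSpace α] {μ : Measure Ω}

theorem measurable_rank {n : ℕ} {f : α → ℝ} (hf : Measurable f) (i : Fin n) :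
    Measurable fun v : Fin n → α => rank (fun j => f (v j)) i := by
  classical
  simp only [rank, card_filter]
  exact Finset.measurable_sum _ fun j _ => Measurable.ite
    (measurableSet_lt (hf.comp (measurable_pi_apply j)) (hf.comp (measurable_pi_apply i)))
    measurable_const measurable_const

theorem Exchangeable.measure_perm_preimage {n : ℕ} {Z : Fin n → Ω → α}
    (hexch : Exchangeable μ Z) (hZ : ∀ i, Measurable (Z i)) (σ : Equiv.Perm (Fin n))
    {S : Set (Fin n → α)} (hS : MeasurableSet S) :
    μ ((fun ω i => Z (σ i) ω) ⁻¹' S) = μ ((fun ω i => Z i ω) ⁻¹' S) := by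
  rw [← Measure.map_apply (measurable_pi_lambda _ fun i => hZ (σ i)) hS, hexch σ,
    Measure.map_apply (measurable_pi_lambda _ hZ) hS]

theorem Exchangeable.measure_rank_lt_eq {n : ℕ} {Z : Fin n → Ω → α}
    (hexch : Exchangeable μ Z) (hZ : ∀ i, Measurable (Z i)) {f : α → ℝ} (hf : Measurable f)
    (k : ℕ) (i j : Fin n) :
    μ {ω | rank (fun l => f (Z l ω)) i < k} = μ {ω | rank (fun l => f (Z l ω)) j < k} := by
  have hS : MeasurableSet {v : Fin n → α | rank (fun l => f (v l)) j < k} :=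
    measurable_rank hf j (measurableSet_lt measurable_id measurable_const)
  have hswap : {ω | rank (fun l => f (Z l ω)) i < k} =
      (fun ω l => Z (Equiv.swap i j l) ω) ⁻¹' {v | rank (fun l => f (v l)) j < k} := by
    ext ω
    change _ ↔ rank ((fun l => f (Z l ω)) ∘ Equiv.swap i j) j < k
    rw [rank_comp_perm, Equiv.swap_apply_right]
    rfl
  rw [hswap, hexch.measure_perm_preimage hZ _ hS]
  rfl

open Classical in
theorem sum_measure_le_of_ae_card_le {ι : Type*} [Fintype ι] {A : ι → Set Ω}
    (hA : ∀ i, MeasurableSet (A i)) {k : ℕ} (hk : ∀ᵐ ω ∂μ, #{i | ω ∈ A i} ≤ k) :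
    ∑ i, μ (A i) ≤ k * μ Set.univ := by
  calc ∑ i, μ (A i) = ∫⁻ ω, ∑ i, (A i).indicator 1 ω ∂μ := by
        rw [lintegral_finsetSum _ fun i _ => measurable_one.indicator (hA i)]
        simp only [lintegral_indicator_one (hA _)]
    _ ≤ ∫⁻ _, (k : ℝ≥0∞) ∂μ := by
        refine lintegral_mono_ae (hk.mono fun ω hω => ?_)
        simp only [Set.indicator_apply, Pi.one_apply, sum_boole]
        exact_mod_cast hω
    _ = k * μ Set.univ := lintegral_const _

theorem Exchangeable.measure_rank_lt_le {n : ℕ} [IsProbabilityMeasure μ]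
    {Z : Fin n → Ω → α} (hexch : Exchangeable μ Z) (hZ : ∀ i, Measurable (Z i))
    {f : α → ℝ} (hf : Measurable f)
    (hinj : ∀ᵐ ω ∂μ, Function.Injective fun l => f (Z l ω)) (k : ℕ) (i : Fin n) :
    n * μ {ω | rank (fun l => f (Z l ω)) i < k} ≤ k := by
  have hA : ∀ j, MeasurableSet {ω | rank (fun l => f (Z l ω)) j < k} := fun j =>
    (measurable_rank hf j).comp (measurable_pi_lambda _ hZ)
      (measurableSet_lt measurable_id measurable_const)
  calc n * μ {ω | rank (fun l => f (Z l ω)) i < k}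
      = ∑ j, μ {ω | rank (fun l => f (Z l ω)) j < k} := by
        simp [hexch.measure_rank_lt_eq hZ hf k _ i]
    _ ≤ k * μ Set.univ := sum_measure_le_of_ae_card_le hA
          (hinj.mono fun ω hω => by simpa using card_filter_rank_lt_le hω k)
    _ = k := by simp

end probability

theorem natCeil_mul_div_le {x y : ℝ} (hx : 0 ≤ x) (hy : 0 < y) :
    (⌈x * y⌉₊ : ℝ) / y ≤ x + 1 / y := by
  rw [div_le_iff₀ hy, add_mul, one_div_mul_cancel hy.ne']
  exact (Nat.ceil_lt_add_one (by positivity)).le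

theorem ENNReal.le_ofReal_div_of_mul_le {a : ℝ≥0∞} {n k : ℕ} (hn : 0 < n)
    (h : n * a ≤ k) :
    a ≤ ENNReal.ofReal (k / n) := by
  rw [ENNReal.ofReal_div_of_pos (by exact_mod_cast hn), ENNReal.ofReal_natCast,
    ENNReal.ofReal_natCast, ENNReal.le_div_iff_mul_le (Or.inl (by simp [hn.ne']))
    (Or.inl (by simp)), mul_comm]
  exact h

theorem cqr_coverage_upper_general {Ω : Type*} [MeasurableSpace Ω]
    (μ : Measure Ω) [IsProbabilityMeasure μ] {m p : ℕ}
    (qlo qhi : (Fin p → ℝ) → ℝ) (hqlo : Measurable qlo) (hqhi : Measurable qhi)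
    (X : Fin (m + 1) → Ω → (Fin p → ℝ)) (Y : Fin (m + 1) → Ω → ℝ)
    (hmeas : ∀ i, Measurable fun ω => (X i ω, Y i ω))
    (hexch : Exchangeable μ fun i ω => (X i ω, Y i ω))
    (α : ℝ) (hα : α ∈ Set.Ioo (0 : ℝ) 1)
    (E : Fin (m + 1) → Ω → ℝ)
    (hE : E = fun i ω => max (qlo (X i ω) - Y i ω) (Y i ω - qhi (X i ω)))
    (hdist : ∀ᵐ ω ∂μ, ∀ i j : Fin (m + 1), i ≠ j → E i ω ≠ E j ω)
    (Q : Ω → ℝ)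
    (hQ : Q = fun ω =>
      orderStat (fun i : Fin m => E i.castSucc ω) ⌈(1 - α) * ((m : ℝ) + 1)⌉₊) :
    μ {ω | qlo (X (Fin.last m) ω) - Q ω ≤ Y (Fin.last m) ω ∧
           Y (Fin.last m) ω ≤ qhi (X (Fin.last m) ω) + Q ω} ≤
      ENNReal.ofReal (1 - α + 1 / ((m : ℝ) + 1)) := by
  set k := ⌈(1 - α) * ((m : ℝ) + 1)⌉₊
  have hm : (0 : ℝ) < m + 1 := by positivity
  have hk : 1 ≤ k := Nat.one_le_iff_ne_zero.mpr
    (Nat.ceil_pos.mpr (mul_pos (sub_pos.mpr hα.2) hm)).ne'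
  set f : (Fin p → ℝ) × ℝ → ℝ := fun z => max (qlo z.1 - z.2) (z.2 - qhi z.1)
  have hf : Measurable f := ((hqlo.comp measurable_fst).sub measurable_snd).max
    (measurable_snd.sub (hqhi.comp measurable_fst))
  have hcover : {ω | qlo (X (Fin.last m) ω) - Q ω ≤ Y (Fin.last m) ω ∧
      Y (Fin.last m) ω ≤ qhi (X (Fin.last m) ω) + Q ω} ⊆
      {ω | rank (fun l => E l ω) (Fin.last m) < k} := by
    rintro ω ⟨hlo, hhi⟩
    have hscore : E (Fin.last m) ω ≤ Q ω := hE ▸ max_le (by linarith) (by linarith)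
    exact rank_last_lt_of_le_orderStat hk _ (hscore.trans_eq (congrFun hQ ω))
  have hinj : ∀ᵐ ω ∂μ, Function.Injective fun l => E l ω :=
    hdist.mono fun ω h i j => not_imp_not.mp (h i j)
  subst hE
  calc _ ≤ _ := measure_mono hcover
    _ ≤ ENNReal.ofReal (k / ((m + 1 : ℕ) : ℝ)) := ENNReal.le_ofReal_div_of_mul_le m.succ_pos
          (hexch.measure_rank_lt_le hmeas hf hinj k (Fin.last m))
    _ ≤ ENNReal.ofReal (1 - α + 1 / ((m : ℝ) + 1)) := by
      push_cast
      exact ENNReal.ofReal_le_ofReal (natCeil_mul_div_le (sub_pos.mpr hα.2).le hm)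

/-- Near-perfect-calibration upper bound of Theorem 1 for CQR, conditional on the proper
training set: if the pairs `(X i, Y i)`, `i = 1, …, m+1`, are exchangeable, the conformity
scores `E i = max (q_lo (X i) - Y i) (Y i - q_hi (X i))` are almost surely pairwise distinct,
`k = ⌈(1-α)(m+1)⌉ ≤ m` and `Q_{1-α}` is the `k`-th smallest value among `E 1, …, E m`, then
`P(q_lo (X (m+1)) - Q_{1-α} ≤ Y (m+1) ≤ q_hi (X (m+1)) + Q_{1-α}) ≤ 1 - α + 1/(m+1)`. -/
theorem cqr_coverage_upper {Ω : Type*} [MeasurableSpace Ω]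
    (μ : Measure Ω) [IsProbabilityMeasure μ] {m p : ℕ}
    (qlo qhi : (Fin p → ℝ) → ℝ) (hqlo : Measurable qlo) (hqhi : Measurable qhi)
    (X : Fin (m + 1) → Ω → (Fin p → ℝ)) (Y : Fin (m + 1) → Ω → ℝ)
    (hmeas : ∀ i, Measurable fun ω => (X i ω, Y i ω))
    (hexch : Exchangeable μ fun i ω => (X i ω, Y i ω))
    (α : ℝ) (hα : α ∈ Set.Ioo (0 : ℝ) 1)
    (E : Fin (m + 1) → Ω → ℝ)
    (hE : E = fun i ω => max (qlo (X i ω) - Y i ω) (Y i ω - qhi (X i ω)))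
    (hdist : ∀ᵐ ω ∂μ, ∀ i j : Fin (m + 1), i ≠ j → E i ω ≠ E j ω)
    (hk : ⌈(1 - α) * ((m : ℝ) + 1)⌉₊ ≤ m)
    (Q : Ω → ℝ)
    (hQ : Q = fun ω =>
      orderStat (fun i : Fin m => E i.castSucc ω) ⌈(1 - α) * ((m : ℝ) + 1)⌉₊) :
    μ {ω | qlo (X (Fin.last m) ω) - Q ω ≤ Y (Fin.last m) ω ∧
           Y (Fin.last m) ω ≤ qhi (X (Fin.last m) ω) + Q ω} ≤
      ENNReal.ofReal (1 - α + 1 / ((m : ℝ) + 1)) :=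
  cqr_coverage_upper_general μ qlo qhi hqlo hqhi X Y hmeas hexch α hα E hE hdist Q hQ
end

section
/- Let α_hi ∈ (0, 1), let q_hi : ℝ^p → ℝ be a measurable function, and let (X_1, Y_1), …, (X_{m+1}, Y_{m+1}) be exchangeable random variables in ℝ^p × ℝ. Define the upper-tail conformity scores E_i^hi = Y_i − q_hi(X_i) for i = 1, …, m+1, and let Q_{1−α_hi} denote the ⌈(1−α_hi)(m+1)⌉-th smallest value among E_1^hi, …, E_m^hi (equal to +∞ if ⌈(1−α_hi)(m+1)⌉ > m). Then P( Y_{m+1} ≤ q_hi(X_{m+1}) + Q_{1−α_hi} ) ≥ 1 − α_hi. -/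
open MeasureTheory Finset
open scoped ENNReal

lemma detA {m : ℕ} (w : Fin m → ℝ) (t : ℝ) (r : ℕ) (hr : r < m)
    (h : (univ.filter fun j => w j < t).card ≤ r) :
    t ≤ (w ∘ Tuple.sort w) ⟨r, hr⟩ := by
  by_contra ht
  push_neg at ht
  have hsub : Finset.image (Tuple.sort w) (Finset.Iic (⟨r, hr⟩ : Fin m)) ⊆
      univ.filter fun j => w j < t := by
    intro j hj
    simp only [Finset.mem_image, Finset.mem_Iic] at hj
    obtain ⟨q, hq, rfl⟩ := hj
    simp only [Finset.mem_filter, Finset.mem_univ, true_and]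
    exact lt_of_le_of_lt (Tuple.monotone_sort w hq) ht
  have hcard := Finset.card_le_card hsub
  rw [Finset.card_image_of_injective _ (Tuple.sort w).injective, Fin.card_Iic,
    Fin.val_mk] at hcard
  omega

lemma detB {n : ℕ} (e : Fin n → ℝ) (r : ℕ) (hr : r < n) :
    r + 1 ≤ (univ.filter fun i =>
      (univ.filter fun j => e j < e i).card ≤ r).card := by
  set σ := Tuple.sort e
  have hsub : Finset.image σ (Finset.Iic (⟨r, hr⟩ : Fin n)) ⊆
      univ.filter fun i => (univ.filter fun j => e j < e i).card ≤ r := by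
    intro i hi
    simp only [Finset.mem_image, Finset.mem_Iic] at hi
    obtain ⟨p, hp, rfl⟩ := hi
    simp only [Finset.mem_filter, Finset.mem_univ, true_and]
    have hsub2 : (univ.filter fun j => e j < e (σ p)) ⊆
        Finset.image σ (Finset.Iio p) := by
      intro j hj
      simp only [Finset.mem_filter, Finset.mem_univ, true_and] at hj
      refine Finset.mem_image.2 ⟨σ.symm j, ?_, by simp⟩
      rw [Finset.mem_Iio]
      by_contra hq
      push_neg at hq
      have : e (σ p) ≤ e (σ (σ.symm j)) := Tuple.monotone_sort e hq
      simp only [Equiv.apply_symm_apply] at this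
      exact absurd hj (not_lt.2 this)
    calc (univ.filter fun j => e j < e (σ p)).card
        ≤ (Finset.image σ (Finset.Iio p)).card := Finset.card_le_card hsub2
      _ = (Finset.Iio p).card := Finset.card_image_of_injective _ σ.injective
      _ = (p : ℕ) := by simp
      _ ≤ r := by exact_mod_cast hp
  have := Finset.card_le_card hsub
  rw [Finset.card_image_of_injective _ σ.injective, Fin.card_Iic, Fin.val_mk] at this
  omega

/-- Upper-tail coverage guarantee of Theorem 2 (asymmetric conformalization), conditional on
the proper training set: if the pairs `(X i, Y i)`, `i = 1, …, m+1`, are exchangeable, the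
upper-tail conformity scores are `E_hi i = Y i - q_hi (X i)`, and `Q_{1-α_hi}` is the
`⌈(1-α_hi)(m+1)⌉`-th smallest value among `E_hi 1, …, E_hi m` (equal to `+∞` when the rank
exceeds `m`), then `P(Y (m+1) ≤ q_hi (X (m+1)) + Q_{1-α_hi}) ≥ 1 - α_hi`. -/
theorem cqr_asymmetric_upper_tail {Ω : Type*} [MeasurableSpace Ω]
    (μ : Measure Ω) [IsProbabilityMeasure μ] {m p : ℕ}
    (qhi : (Fin p → ℝ) → ℝ) (hqhi : Measurable qhi)
    (X : Fin (m + 1) → Ω → (Fin p → ℝ)) (Y : Fin (m + 1) → Ω → ℝ)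
    (hmeas : ∀ i, Measurable fun ω => (X i ω, Y i ω))
    (hexch : Exchangeable μ fun i ω => (X i ω, Y i ω))
    (αhi : ℝ) (hαhi : αhi ∈ Set.Ioo (0 : ℝ) 1)
    (Ehi : Fin (m + 1) → Ω → ℝ) (hEhi : Ehi = fun i ω => Y i ω - qhi (X i ω))
    (Q : Ω → EReal)
    (hQ : Q = fun ω =>
      orderStatE (fun i : Fin m => Ehi i.castSucc ω) ⌈(1 - αhi) * ((m : ℝ) + 1)⌉₊) :
    ENNReal.ofReal (1 - αhi) ≤
      μ {ω | (Y (Fin.last m) ω : EReal) ≤ (qhi (X (Fin.last m) ω) : EReal) + Q ω} := by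
  classical
  obtain ⟨hα0, hα1⟩ := hαhi
  set k : ℕ := ⌈(1 - αhi) * ((m : ℝ) + 1)⌉₊ with hk_def
  have hα_le : (1 - αhi) * ((m : ℝ) + 1) ≤ k := Nat.le_ceil _
  by_cases hk : k - 1 < m
  case neg =>
    -- Q = ⊤, so the event is everything
    have hset : {ω | (Y (Fin.last m) ω : EReal) ≤ (qhi (X (Fin.last m) ω) : EReal) + Q ω}
        = Set.univ := by
      ext ω
      simp only [Set.mem_setOf_eq, Set.mem_univ, iff_true, hQ, orderStatE, dif_neg hk]
      rw [EReal.coe_add_top]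
      exact le_top
    rw [hset, measure_univ]
    exact ENNReal.ofReal_le_one.2 (by linarith)
  case pos =>
    have hk1 : 1 ≤ k := by
      rw [hk_def, Nat.one_le_ceil_iff]
      have h1α : 0 < 1 - αhi := by linarith
      positivity
    -- setup
    set score : ((Fin p → ℝ) × ℝ) → ℝ := fun z => z.2 - qhi z.1 with hscore
    have hscore_meas : Measurable score := measurable_snd.sub (hqhi.comp measurable_fst)
    set Z : Ω → (Fin (m + 1) → (Fin p → ℝ) × ℝ) := fun ω i => (X i ω, Y i ω) with hZ
    have hZmeas : Measurable Z := measurable_pi_lambda _ hmeas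
    set S : Fin (m + 1) → Set (Fin (m + 1) → (Fin p → ℝ) × ℝ) := fun i =>
      {z | (univ.filter fun j => score (z j) < score (z i)).card ≤ k - 1} with hS
    have hSmeas : ∀ i, MeasurableSet (S i) := by
      intro i
      have hcount : Measurable fun z : Fin (m + 1) → (Fin p → ℝ) × ℝ =>
          (univ.filter fun j => score (z j) < score (z i)).card := by
        have heq : (fun z : Fin (m + 1) → (Fin p → ℝ) × ℝ =>
            (univ.filter fun j => score (z j) < score (z i)).card)
            = fun z => ∑ j : Fin (m + 1), if score (z j) < score (z i) then 1 else 0 := by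
          funext z
          rw [Finset.card_filter]
        rw [heq]
        apply Finset.measurable_sum
        intro j _
        apply Measurable.ite _ measurable_const measurable_const
        exact measurableSet_lt (hscore_meas.comp (measurable_pi_apply j))
          (hscore_meas.comp (measurable_pi_apply i))
      exact hcount measurableSet_Iic
    -- exchangeability: all μ (Z ⁻¹' S i) are equal
    have hexch' : ∀ i : Fin (m + 1), μ (Z ⁻¹' S i) = μ (Z ⁻¹' S (Fin.last m)) := by
      intro i
      set σ : Equiv.Perm (Fin (m + 1)) := Equiv.swap i (Fin.last m) with hσ
      set T : (Fin (m + 1) → (Fin p → ℝ) × ℝ) → (Fin (m + 1) → (Fin p → ℝ) × ℝ) :=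
        fun z j => z (σ j) with hT
      have hTmeas : Measurable T :=
        measurable_pi_lambda _ fun j => measurable_pi_apply (σ j)
      have hTpre : T ⁻¹' (S (Fin.last m)) = S i := by
        ext z
        simp only [hT, hS, Set.mem_preimage, Set.mem_setOf_eq]
        have h1 : σ (Fin.last m) = i := Equiv.swap_apply_right _ _
        simp only [h1]
        have h2 : (univ.filter fun j => score (z (σ j)) < score (z i))
            = Finset.image σ.symm (univ.filter fun j => score (z j) < score (z i)) := by
          ext j
          simp only [Finset.mem_filter, Finset.mem_univ, true_and, Finset.mem_image]
          constructor
          · intro h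
            exact ⟨σ j, h, σ.symm_apply_apply j⟩
          · rintro ⟨a, ha, rfl⟩
            rwa [σ.apply_symm_apply]
        rw [h2, Finset.card_image_of_injective _ σ.symm.injective]
      have this : Measure.map (T ∘ Z) μ = Measure.map Z μ := hexch σ
      calc μ (Z ⁻¹' S i) = μ ((T ∘ Z) ⁻¹' S (Fin.last m)) := by
            rw [Set.preimage_comp, hTpre]
        _ = Measure.map (T ∘ Z) μ (S (Fin.last m)) :=
            (Measure.map_apply (hTmeas.comp hZmeas) (hSmeas _)).symm
        _ = Measure.map Z μ (S (Fin.last m)) := by rw [this]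
        _ = μ (Z ⁻¹' S (Fin.last m)) := Measure.map_apply hZmeas (hSmeas _)
    -- counting bound: ∑ indicators ≥ k pointwise
    have hpoint : ∀ ω, (k : ℝ≥0∞) ≤ ∑ i : Fin (m + 1), (Z ⁻¹' S i).indicator 1 ω := by
      intro ω
      have hsum : ∑ i : Fin (m + 1), (Z ⁻¹' S i).indicator (1 : Ω → ℝ≥0∞) ω
          = ((univ.filter fun i : Fin (m + 1) => ω ∈ Z ⁻¹' S i).card : ℝ≥0∞) := by
        rw [← Finset.sum_boole]
        refine Finset.sum_congr rfl fun i _ => ?_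
        by_cases h : ω ∈ Z ⁻¹' S i <;> simp [Set.indicator_apply, h]
      rw [hsum]
      have hmem : ∀ i : Fin (m + 1), (ω ∈ Z ⁻¹' S i) ↔
          ((univ.filter fun j : Fin (m + 1) => Ehi j ω < Ehi i ω).card ≤ k - 1) := by
        intro i
        simp only [Set.mem_preimage, hS, Set.mem_setOf_eq, hZ, hscore, hEhi]
      have hB := detB (fun i : Fin (m + 1) => Ehi i ω) (k - 1) (by omega)
      have : k - 1 + 1 = k := by omega
      rw [this] at hB
      have hrw : (univ.filter fun i : Fin (m + 1) => ω ∈ Z ⁻¹' S i)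
          = univ.filter fun i : Fin (m + 1) =>
              (univ.filter fun j : Fin (m + 1) => Ehi j ω < Ehi i ω).card ≤ k - 1 := by
        apply Finset.filter_congr
        intro i _
        simp only [hmem i]
      rw [hrw]
      exact_mod_cast hB
    -- sum of measures ≥ k
    have hsum_meas : (k : ℝ≥0∞) ≤ ∑ i : Fin (m + 1), μ (Z ⁻¹' S i) := by
      have h1 : ∑ i : Fin (m + 1), μ (Z ⁻¹' S i)
          = ∫⁻ ω, ∑ i : Fin (m + 1), (Z ⁻¹' S i).indicator 1 ω ∂μ := by
        rw [lintegral_finset_sum]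
        · refine Finset.sum_congr rfl fun i _ => ?_
          rw [lintegral_indicator_one (hZmeas (hSmeas i))]
        · exact fun i _ => measurable_one.indicator (hZmeas (hSmeas i))
      rw [h1]
      calc (k : ℝ≥0∞) = ∫⁻ _, (k : ℝ≥0∞) ∂μ := by rw [lintegral_const, measure_univ, mul_one]
        _ ≤ _ := lintegral_mono hpoint
    have hconst : ∑ i : Fin (m + 1), μ (Z ⁻¹' S i) = ((m + 1 : ℕ) : ℝ≥0∞) * μ (Z ⁻¹' S (Fin.last m)) := by
      rw [Finset.sum_congr rfl fun i _ => hexch' i, Finset.sum_const, Finset.card_univ,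
        Fintype.card_fin, nsmul_eq_mul]
    -- conclude μ (A last) ≥ ofReal (1 - α)
    have hn : ((m + 1 : ℕ) : ℝ≥0∞) = ENNReal.ofReal ((m : ℝ) + 1) := by
      rw [show ((m : ℝ) + 1) = ((m + 1 : ℕ) : ℝ) by push_cast; ring, ENNReal.ofReal_natCast]
    have hkey : ENNReal.ofReal (1 - αhi) ≤ μ (Z ⁻¹' S (Fin.last m)) := by
      rw [← ENNReal.mul_le_mul_iff_left (a := ENNReal.ofReal (1 - αhi))
        (c := ((m + 1 : ℕ) : ℝ≥0∞)) (by simp) (by simp)]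
      calc ENNReal.ofReal (1 - αhi) * ((m + 1 : ℕ) : ℝ≥0∞)
          = ENNReal.ofReal ((1 - αhi) * ((m : ℝ) + 1)) := by
            rw [hn, ← ENNReal.ofReal_mul (by linarith)]
        _ ≤ (k : ℝ≥0∞) := by
            rw [← ENNReal.ofReal_natCast k]
            exact ENNReal.ofReal_le_ofReal hα_le
        _ ≤ ((m + 1 : ℕ) : ℝ≥0∞) * μ (Z ⁻¹' S (Fin.last m)) := by rw [← hconst]; exact hsum_meas
        _ = μ (Z ⁻¹' S (Fin.last m)) * ((m + 1 : ℕ) : ℝ≥0∞) := mul_comm _ _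
    -- inclusion of events
    refine le_trans hkey (measure_mono ?_)
    intro ω hω
    have hω' : (univ.filter fun j : Fin (m + 1) => Ehi j ω < Ehi (Fin.last m) ω).card ≤ k - 1 := by
      have hsc : ∀ j : Fin (m + 1), score (Z ω j) = Ehi j ω := fun j => by
        simp [hscore, hZ, hEhi]
      have hω2 : (univ.filter fun j : Fin (m + 1) =>
          score (Z ω j) < score (Z ω (Fin.last m))).card ≤ k - 1 := hω
      simpa only [hsc] using hω2
    have hcast : (univ.filter fun j : Fin m => Ehi j.castSucc ω < Ehi (Fin.last m) ω).card
        ≤ k - 1 := by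
      refine le_trans ?_ hω'
      rw [← Finset.card_image_of_injective
        (univ.filter fun j : Fin m => Ehi j.castSucc ω < Ehi (Fin.last m) ω)
        (Fin.castSucc_injective m)]
      apply Finset.card_le_card
      intro j hj
      simp only [Finset.mem_image, Finset.mem_filter, Finset.mem_univ, true_and] at hj ⊢
      obtain ⟨a, ha, rfl⟩ := hj
      exact ha
    have hA := detA (fun i : Fin m => Ehi i.castSucc ω) (Ehi (Fin.last m) ω) (k - 1) hk hcast
    show (Y (Fin.last m) ω : EReal) ≤ (qhi (X (Fin.last m) ω) : EReal) + Q ω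
    rw [hQ]
    simp only [orderStatE, ← hk_def, dif_pos hk]
    rw [← EReal.coe_add, EReal.coe_le_coe_iff]
    have hE : Ehi (Fin.last m) ω = Y (Fin.last m) ω - qhi (X (Fin.last m) ω) := by rw [hEhi]
    rw [hE] at hA
    linarith [hA]
end

section
/- Let α_lo, α_hi ∈ (0, 1) with α_lo + α_hi < 1, let q_lo, q_hi : ℝ^p → ℝ be measurable functions, and let (X_1, Y_1), …, (X_{m+1}, Y_{m+1}) be exchangeable random variables in ℝ^p × ℝ. Define E_i^lo = q_lo(X_i) − Y_i and E_i^hi = Y_i − q_hi(X_i) for i = 1, …, m+1; let Q_{1−α_lo} be the ⌈(1−α_lo)(m+1)⌉-th smallest value among E_1^lo, …, E_m^lo and Q_{1−α_hi} the ⌈(1−α_hi)(m+1)⌉-th smallest value among E_1^hi, …, E_m^hi (each equal to +∞ when the required rank exceeds m). Then P( q_lo(X_{m+1}) − Q_{1−α_lo} ≤ Y_{m+1} ≤ q_hi(X_{m+1}) + Q_{1−α_hi} ) ≥ 1 − (α_lo + α_hi). -/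
open MeasureTheory

open Finset

lemma card_filter_comp_perm {n : ℕ} (e : Equiv.Perm (Fin n)) (p : Fin n → Prop) [DecidablePred p] :
    (univ.filter fun i => p (e i)).card = (univ.filter p).card := by
  apply Finset.card_bij (fun i _ => e i)
  · intro a ha; simp at ha ⊢; exact ha
  · intro a _ b _ h; exact e.injective h
  · intro b hb; exact ⟨e.symm b, by simpa using hb, by simp⟩

lemma sorted_lt_iff {n : ℕ} (w : Fin n → ℝ) (t : ℝ) {k : ℕ} (hk : k < n) :
    (w ∘ Tuple.sort w) ⟨k, hk⟩ < t ↔ k < (univ.filter fun i => w i < t).card := by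
  set g := w ∘ Tuple.sort w with hg
  have hmono : Monotone g := Tuple.monotone_sort w
  have hcard : (univ.filter fun i => g i < t).card = (univ.filter fun i => w i < t).card :=
    card_filter_comp_perm (Tuple.sort w) (fun i => w i < t)
  rw [← hcard]
  constructor
  · intro h
    have hsub : (Finset.Iic (⟨k, hk⟩ : Fin n)) ⊆ univ.filter fun i => g i < t := by
      intro i hi
      simp only [Finset.mem_Iic] at hi
      simp only [mem_filter, mem_univ, true_and]
      exact lt_of_le_of_lt (hmono hi) h
    have h1 := Finset.card_le_card hsub
    rw [Fin.card_Iic] at h1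
    simpa using h1
  · intro h
    by_contra hge
    push_neg at hge
    have hsub : (univ.filter fun i => g i < t) ⊆ Finset.Iio (⟨k, hk⟩ : Fin n) := by
      intro i hi
      simp only [mem_filter, mem_univ, true_and] at hi
      simp only [Finset.mem_Iio]
      by_contra hik
      push_neg at hik
      exact absurd (lt_of_le_of_lt (hge.trans (hmono hik)) hi) (lt_irrefl _)
    have h2 := Finset.card_le_card hsub
    rw [Fin.card_Iio] at h2
    simp at h2
    omega


-- key deterministic equivalence
lemma key_iff_s12 {m : ℕ} (z : Fin (m + 1) → ℝ) {k : ℕ} (hk : 1 ≤ k) :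
    ((z (Fin.last m) : EReal) ≤ orderStatE (fun i : Fin m => z i.castSucc) k) ↔
      ¬ ((univ.filter fun i => z (Fin.last m) ≤ z i).card ≤ (m + 1) - k) := by
  have hlast : Fin.last m ∈ univ.filter fun i => z (Fin.last m) ≤ z i := by simp
  have hcpos : 0 < (univ.filter fun i => z (Fin.last m) ≤ z i).card :=
    Finset.card_pos.mpr ⟨_, hlast⟩
  unfold orderStatE
  by_cases h : k - 1 < m
  · rw [dif_pos h, EReal.coe_le_coe_iff, ← not_lt,
      sorted_lt_iff (fun i : Fin m => z i.castSucc) (z (Fin.last m)) h]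
    have hsplit : (univ.filter fun i : Fin (m+1) => z (Fin.last m) ≤ z i).card
        = (m + 1) - (univ.filter fun i : Fin (m+1) => z i < z (Fin.last m)).card := by
      have := Finset.card_filter_add_card_filter_not
        (s := (univ : Finset (Fin (m+1)))) (p := fun i => z (Fin.last m) ≤ z i)
      simp only [not_le, Finset.card_univ, Fintype.card_fin] at this
      omega
    have hcast : (univ.filter fun i : Fin (m+1) => z i < z (Fin.last m)).card
        = (univ.filter fun i : Fin m => z i.castSucc < z (Fin.last m)).card := by
      have himg : (univ.filter fun i : Fin (m+1) => z i < z (Fin.last m))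
          = (univ.filter fun i : Fin m => z i.castSucc < z (Fin.last m)).image Fin.castSucc := by
        ext a
        simp only [mem_filter, mem_univ, true_and, mem_image]
        constructor
        · intro ha
          have hne : a ≠ Fin.last m := fun hh => absurd ha (by simp [hh])
          exact ⟨a.castPred hne, by simpa [Fin.castSucc_castPred] using ha,
            Fin.castSucc_castPred _ _⟩
        · rintro ⟨b, hb, rfl⟩; exact hb
      rw [himg, Finset.card_image_of_injective _ (Fin.castSucc_injective m)]
    rw [hcast] at hsplit
    have hle' : (univ.filter fun i : Fin m => z i.castSucc < z (Fin.last m)).card ≤ m :=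
      (Finset.card_filter_le _ _).trans (by simp)
    rw [hsplit]
    omega
  · rw [dif_neg h]
    simp only [le_top, true_iff]
    omega

lemma card_rank_le_s12 {n : ℕ} (z : Fin n → ℝ) (c : ℕ) :
    (univ.filter fun j => (univ.filter fun i => z j ≤ z i).card ≤ c).card ≤ c := by
  set S := univ.filter fun j => (univ.filter fun i => z j ≤ z i).card ≤ c with hS
  rcases S.eq_empty_or_nonempty with h | h
  · simp [h]
  · obtain ⟨j0, hj0mem, hj0⟩ := S.exists_min_image z h
    have hj0c : (univ.filter fun i => z j0 ≤ z i).card ≤ c := by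
      rw [hS] at hj0mem; simpa using hj0mem
    refine le_trans (Finset.card_le_card ?_) hj0c
    intro j hj
    simp only [mem_filter, mem_univ, true_and]
    exact hj0 j hj

open MeasureTheory ENNReal in
lemma onesided {Ω β : Type*} [MeasurableSpace Ω] [MeasurableSpace β]
    (μ : Measure Ω) [IsProbabilityMeasure μ] {n : ℕ}
    (Z : Fin (n + 1) → Ω → β) (hZ : ∀ i, Measurable (Z i))
    (hexch : ∀ σ : Equiv.Perm (Fin (n+1)),
      Measure.map (fun ω (i : Fin (n+1)) => Z (σ i) ω) μ
        = Measure.map (fun ω (i : Fin (n+1)) => Z i ω) μ)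
    (φ : β → ℝ) (hφ : Measurable φ) (c : ℕ) :
    ((n + 1) : ℝ≥0∞) *
      μ {ω | (univ.filter fun i => φ (Z (Fin.last n) ω) ≤ φ (Z i ω)).card ≤ c}
      ≤ c := by
  classical
  set A : Fin (n + 1) → Set (Fin (n + 1) → β) :=
    fun j => {v | (univ.filter fun i => φ (v j) ≤ φ (v i)).card ≤ c} with hA
  have hAmeas : ∀ j, MeasurableSet (A j) := by
    intro j
    have hcnt : Measurable fun v : Fin (n+1) → β =>
        ∑ i : Fin (n+1), if φ (v j) ≤ φ (v i) then (1:ℕ) else 0 := by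
      apply Finset.measurable_sum
      intro i _
      apply Measurable.ite _ measurable_const measurable_const
      exact measurableSet_le (hφ.comp (measurable_pi_apply j)) (hφ.comp (measurable_pi_apply i))
    have hrepr : A j = (fun v : Fin (n+1) → β =>
        ∑ i : Fin (n+1), if φ (v j) ≤ φ (v i) then (1:ℕ) else 0) ⁻¹' Set.Iic c := by
      ext v
      simp only [hA, Set.mem_setOf_eq, Set.mem_preimage, Set.mem_Iic]
      rw [Finset.card_filter]
    rw [hrepr]
    exact hcnt measurableSet_Iic
  set B : Fin (n + 1) → Set Ω := fun j => (fun ω (i : Fin (n+1)) => Z i ω) ⁻¹' A j with hB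
  have hmap : Measurable (fun ω (i : Fin (n+1)) => Z i ω) := measurable_pi_lambda _ hZ
  have hBmeas : ∀ j, MeasurableSet (B j) := fun j => hmap (hAmeas j)
  have hBmem : ∀ j ω, ω ∈ B j ↔ (univ.filter fun i => φ (Z j ω) ≤ φ (Z i ω)).card ≤ c := by
    intro j ω
    simp only [hB, hA, Set.mem_preimage, Set.mem_setOf_eq]
  have hBeq : ∀ j, μ (B j) = μ (B (Fin.last n)) := by
    intro j
    set σ := Equiv.swap j (Fin.last n) with hσ
    have hmapσ : Measurable (fun ω (i : Fin (n+1)) => Z (σ i) ω) :=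
      measurable_pi_lambda _ fun i => hZ (σ i)
    have key : (fun ω (i : Fin (n+1)) => Z (σ i) ω) ⁻¹' A (Fin.last n) = B j := by
      ext ω
      simp only [hB, hA, Set.mem_preimage, Set.mem_setOf_eq]
      have h1 : σ (Fin.last n) = j := Equiv.swap_apply_right _ _
      simp only [h1]
      rw [card_filter_comp_perm σ (fun i => φ (Z j ω) ≤ φ (Z i ω))]
    calc μ (B j) = μ ((fun ω (i : Fin (n+1)) => Z (σ i) ω) ⁻¹' A (Fin.last n)) := by rw [key]
      _ = (Measure.map (fun ω (i : Fin (n+1)) => Z (σ i) ω) μ) (A (Fin.last n)) :=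
          (Measure.map_apply hmapσ (hAmeas _)).symm
      _ = (Measure.map (fun ω (i : Fin (n+1)) => Z i ω) μ) (A (Fin.last n)) := by rw [hexch σ]
      _ = μ (B (Fin.last n)) := Measure.map_apply hmap (hAmeas _)
  have hsum : ∑ j : Fin (n+1), μ (B j) ≤ (c : ℝ≥0∞) := by
    have h1 : ∀ j : Fin (n+1), μ (B j)
        = ∫⁻ ω, (B j).indicator 1 ω ∂μ := fun j => (lintegral_indicator_one (hBmeas j)).symm
    calc ∑ j : Fin (n+1), μ (B j)
        = ∫⁻ ω, ∑ j : Fin (n+1), (B j).indicator 1 ω ∂μ := by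
          simp_rw [h1]
          rw [← lintegral_finset_sum]
          intro j _
          exact measurable_one.indicator (hBmeas j)
      _ ≤ ∫⁻ _, (c : ℝ≥0∞) ∂μ := by
          apply lintegral_mono
          intro ω
          dsimp only
          have hpt : ∑ j : Fin (n+1), (B j).indicator 1 ω
              = ((univ.filter fun j : Fin (n+1) =>
                  (univ.filter fun i => φ (Z j ω) ≤ φ (Z i ω)).card ≤ c).card : ℝ≥0∞) := by
            rw [Finset.card_filter, Nat.cast_sum]
            apply Finset.sum_congr rfl
            intro j _
            rw [Set.indicator_apply]
            by_cases hj : ω ∈ B j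
            · rw [if_pos hj, if_pos ((hBmem j ω).mp hj)]
              simp
            · rw [if_neg hj, if_neg (fun hc => hj ((hBmem j ω).mpr hc))]
              simp
          rw [hpt]
          exact_mod_cast Nat.cast_le.mpr (card_rank_le_s12 (fun i => φ (Z i ω)) c)
      _ = (c : ℝ≥0∞) := by simp
  calc ((n + 1) : ℝ≥0∞) * μ (B (Fin.last n)) = ∑ _j : Fin (n+1), μ (B (Fin.last n)) := by
        simp [Finset.sum_const, mul_comm]
    _ = ∑ j : Fin (n+1), μ (B j) := Finset.sum_congr rfl fun j _ => (hBeq j).symm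
    _ ≤ (c : ℝ≥0∞) := hsum

lemma ereal_helper1 (a b : ℝ) (q : EReal) :
    (a : EReal) - q ≤ (b : EReal) ↔ ((a - b : ℝ) : EReal) ≤ q := by
  induction q using EReal.rec with
  | bot =>
    simp only [EReal.coe_sub_bot, le_bot_iff]
    constructor
    · intro h; exact absurd (top_le_iff.mp h) (EReal.coe_ne_top _)
    · intro h; exact absurd h (EReal.coe_ne_bot _)
  | coe q =>
    rw [← EReal.coe_sub, EReal.coe_le_coe_iff, EReal.coe_le_coe_iff]
    constructor <;> intro h <;> linarith
  | top =>
    simp only [EReal.sub_top, le_top, iff_true, bot_le]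

lemma ereal_helper2 (b c : ℝ) (q : EReal) :
    (b : EReal) ≤ (c : EReal) + q ↔ ((b - c : ℝ) : EReal) ≤ q := by
  induction q using EReal.rec with
  | bot =>
    rw [EReal.add_bot]
    simp only [le_bot_iff]
    constructor
    · intro h; exact absurd h (EReal.coe_ne_bot _)
    · intro h; exact absurd h (EReal.coe_ne_bot _)
  | coe q =>
    rw [← EReal.coe_add, EReal.coe_le_coe_iff, EReal.coe_le_coe_iff]
    constructor <;> intro h <;> linarith
  | top =>
    rw [EReal.add_top_of_ne_bot (by simp)]
    simp only [le_top]

open MeasureTheory ENNReal in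
theorem cqr_main {Ω : Type*} [MeasurableSpace Ω]
    (μ : Measure Ω) [IsProbabilityMeasure μ] {m p : ℕ}
    (qlo qhi : (Fin p → ℝ) → ℝ) (hqlo : Measurable qlo) (hqhi : Measurable qhi)
    (X : Fin (m + 1) → Ω → (Fin p → ℝ)) (Y : Fin (m + 1) → Ω → ℝ)
    (hmeas : ∀ i, Measurable fun ω => (X i ω, Y i ω))
    (hexch : ∀ σ : Equiv.Perm (Fin (m+1)),
      Measure.map (fun ω (i : Fin (m+1)) => (X (σ i) ω, Y (σ i) ω)) μ
        = Measure.map (fun ω (i : Fin (m+1)) => (X i ω, Y i ω)) μ)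
    (αlo αhi : ℝ) (hαlo : αlo ∈ Set.Ioo (0 : ℝ) 1) (hαhi : αhi ∈ Set.Ioo (0 : ℝ) 1)
    (hsum : αlo + αhi < 1) :
    ENNReal.ofReal (1 - (αlo + αhi)) ≤
      μ {ω | (qlo (X (Fin.last m) ω) : EReal) -
              orderStatE (fun i : Fin m => qlo (X i.castSucc ω) - Y i.castSucc ω)
                ⌈(1 - αlo) * ((m : ℝ) + 1)⌉₊ ≤ (Y (Fin.last m) ω : EReal) ∧
             (Y (Fin.last m) ω : EReal) ≤ (qhi (X (Fin.last m) ω) : EReal) +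
              orderStatE (fun i : Fin m => Y i.castSucc ω - qhi (X i.castSucc ω))
                ⌈(1 - αhi) * ((m : ℝ) + 1)⌉₊} := by
  classical
  set Z : Fin (m + 1) → Ω → (Fin p → ℝ) × ℝ := fun i ω => (X i ω, Y i ω) with hZdef
  set φlo : (Fin p → ℝ) × ℝ → ℝ := fun v => qlo v.1 - v.2 with hφlo
  set φhi : (Fin p → ℝ) × ℝ → ℝ := fun v => v.2 - qhi v.1 with hφhi
  have hφlom : Measurable φlo := (hqlo.comp measurable_fst).sub measurable_snd
  have hφhim : Measurable φhi := measurable_snd.sub (hqhi.comp measurable_fst)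
  set klo := ⌈(1 - αlo) * ((m : ℝ) + 1)⌉₊ with hklo
  set khi := ⌈(1 - αhi) * ((m : ℝ) + 1)⌉₊ with hkhi
  have hmpos : (0:ℝ) < (m:ℝ) + 1 := by positivity
  have hklo1 : 1 ≤ klo := Nat.ceil_pos.mpr (by nlinarith [hαlo.2])
  have hkhi1 : 1 ≤ khi := Nat.ceil_pos.mpr (by nlinarith [hαhi.2])
  set Slo : Set Ω := {ω | (Finset.univ.filter fun i =>
      φlo (Z (Fin.last m) ω) ≤ φlo (Z i ω)).card ≤ (m + 1) - klo} with hSlo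
  set Shi : Set Ω := {ω | (Finset.univ.filter fun i =>
      φhi (Z (Fin.last m) ω) ≤ φhi (Z i ω)).card ≤ (m + 1) - khi} with hShi
  have honelo := onesided μ Z hmeas hexch φlo hφlom ((m + 1) - klo)
  have honehi := onesided μ Z hmeas hexch φhi hφhim ((m + 1) - khi)
  -- bound μ Slo ≤ ofReal αlo
  have hbound : ∀ (α : ℝ), α ∈ Set.Ioo (0:ℝ) 1 → ∀ (k : ℕ), (1 - α) * ((m:ℝ)+1) ≤ k →
      ∀ (S : Set Ω), ((m + 1 : ℕ) : ℝ≥0∞) * μ S ≤ (((m + 1) - k : ℕ) : ℝ≥0∞) →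
      μ S ≤ ENNReal.ofReal α := by
    intro α hα k hk S hS
    have hreal : (((m + 1) - k : ℕ) : ℝ) ≤ α * ((m:ℝ)+1) := by
      rcases le_or_gt k (m+1) with h | h
      · rw [Nat.cast_sub h]; push_cast; nlinarith
      · rw [Nat.sub_eq_zero_of_le h.le]; push_cast; nlinarith [mul_pos hα.1 hmpos]
    have hc : (((m + 1) - k : ℕ) : ℝ≥0∞) ≤ ENNReal.ofReal α * ((m + 1 : ℕ) : ℝ≥0∞) := by
      rw [← ENNReal.ofReal_natCast ((m+1) - k), ← ENNReal.ofReal_natCast (m+1),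
        ← ENNReal.ofReal_mul hα.1.le]
      apply ENNReal.ofReal_le_ofReal
      push_cast
      push_cast at hreal
      linarith
    have := hS.trans hc
    rw [mul_comm (ENNReal.ofReal α) _] at this
    exact (ENNReal.mul_le_mul_iff_right (by simp) (by simp)).mp this
  have hμlo : μ Slo ≤ ENNReal.ofReal αlo := by
    refine hbound αlo hαlo klo (Nat.le_ceil _) Slo ?_
    exact_mod_cast honelo
  have hμhi : μ Shi ≤ ENNReal.ofReal αhi := by
    refine hbound αhi hαhi khi (Nat.le_ceil _) Shi ?_
    exact_mod_cast honehi
  -- coverage implication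
  set S : Set Ω := {ω | (qlo (X (Fin.last m) ω) : EReal) -
      orderStatE (fun i : Fin m => qlo (X i.castSucc ω) - Y i.castSucc ω) klo
        ≤ (Y (Fin.last m) ω : EReal) ∧
      (Y (Fin.last m) ω : EReal) ≤ (qhi (X (Fin.last m) ω) : EReal) +
      orderStatE (fun i : Fin m => Y i.castSucc ω - qhi (X i.castSucc ω)) khi} with hS
  have hcover : Set.univ ⊆ S ∪ (Slo ∪ Shi) := by
    intro ω _
    by_cases hlo : ω ∈ Slo
    · exact Or.inr (Or.inl hlo)
    by_cases hhi : ω ∈ Shi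
    · exact Or.inr (Or.inr hhi)
    left
    constructor
    · have hkey := (key_iff_s12 (fun i => φlo (Z i ω)) hklo1).mpr hlo
      rw [ereal_helper1]
      exact hkey
    · have hkey := (key_iff_s12 (fun i => φhi (Z i ω)) hkhi1).mpr hhi
      rw [ereal_helper2]
      exact hkey
  have h1 : (1 : ℝ≥0∞) ≤ μ S + μ (Slo ∪ Shi) := by
    calc (1 : ℝ≥0∞) = μ Set.univ := (measure_univ).symm
      _ ≤ μ (S ∪ (Slo ∪ Shi)) := measure_mono hcover
      _ ≤ μ S + μ (Slo ∪ Shi) := measure_union_le _ _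
  have h2 : μ (Slo ∪ Shi) ≤ ENNReal.ofReal (αlo + αhi) := by
    calc μ (Slo ∪ Shi) ≤ μ Slo + μ Shi := measure_union_le _ _
      _ ≤ ENNReal.ofReal αlo + ENNReal.ofReal αhi := add_le_add hμlo hμhi
      _ = ENNReal.ofReal (αlo + αhi) := (ENNReal.ofReal_add hαlo.1.le hαhi.1.le).symm
  calc ENNReal.ofReal (1 - (αlo + αhi))
      = 1 - ENNReal.ofReal (αlo + αhi) := by
        rw [ENNReal.ofReal_sub _ (by linarith [hαlo.1, hαhi.1] : (0:ℝ) ≤ αlo + αhi),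
          ENNReal.ofReal_one]
    _ ≤ 1 - μ (Slo ∪ Shi) := tsub_le_tsub_left h2 1
    _ ≤ μ S := by
        rw [tsub_le_iff_right]
        exact h1.trans (by rw [add_comm] )

/-- Combined coverage guarantee of Theorem 2 (asymmetric conformalization), conditional on the
proper training set: conformalizing the lower and upper quantile estimates separately with
miscoverage budgets `α_lo` and `α_hi` yields
`P(q_lo (X (m+1)) - Q_{1-α_lo} ≤ Y (m+1) ≤ q_hi (X (m+1)) + Q_{1-α_hi}) ≥ 1 - (α_lo + α_hi)`. -/
theorem cqr_asymmetric_coverage {Ω : Type*} [MeasurableSpace Ω]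
    (μ : Measure Ω) [IsProbabilityMeasure μ] {m p : ℕ}
    (qlo qhi : (Fin p → ℝ) → ℝ) (hqlo : Measurable qlo) (hqhi : Measurable qhi)
    (X : Fin (m + 1) → Ω → (Fin p → ℝ)) (Y : Fin (m + 1) → Ω → ℝ)
    (hmeas : ∀ i, Measurable fun ω => (X i ω, Y i ω))
    (hexch : Exchangeable μ fun i ω => (X i ω, Y i ω))
    (αlo αhi : ℝ) (hαlo : αlo ∈ Set.Ioo (0 : ℝ) 1) (hαhi : αhi ∈ Set.Ioo (0 : ℝ) 1)
    (hsum : αlo + αhi < 1)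
    (Elo Ehi : Fin (m + 1) → Ω → ℝ)
    (hElo : Elo = fun i ω => qlo (X i ω) - Y i ω)
    (hEhi : Ehi = fun i ω => Y i ω - qhi (X i ω))
    (Qlo Qhi : Ω → EReal)
    (hQlo : Qlo = fun ω =>
      orderStatE (fun i : Fin m => Elo i.castSucc ω) ⌈(1 - αlo) * ((m : ℝ) + 1)⌉₊)
    (hQhi : Qhi = fun ω =>
      orderStatE (fun i : Fin m => Ehi i.castSucc ω) ⌈(1 - αhi) * ((m : ℝ) + 1)⌉₊) :
    ENNReal.ofReal (1 - (αlo + αhi)) ≤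
      μ {ω | (qlo (X (Fin.last m) ω) : EReal) - Qlo ω ≤ (Y (Fin.last m) ω : EReal) ∧
             (Y (Fin.last m) ω : EReal) ≤ (qhi (X (Fin.last m) ω) : EReal) + Qhi ω} := by
  subst hElo hEhi hQlo hQhi
  exact cqr_main μ qlo qhi hqlo hqhi X Y hmeas hexch αlo αhi hαlo hαhi hsum
end

section
/- Let α ∈ (0, 1) and let Z_1, …, Z_{n+1} be i.i.d. real-valued random variables. Let k = ⌈(1−α)(n+1)⌉. If k ≤ n, let Q̂ denote the k-th smallest value among Z_1, …, Z_n; then P(Z_{n+1} ≤ Q̂) ≥ 1 − α. -/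
/-!
`Z (n+1) ≤ Q̂` holds exactly when fewer than `k` of all `n + 1` variables lie strictly below
`Z (n+1)`. On every outcome at least `k` of the variables have this property (the `k` smallest do),
and since i.i.d. variables are exchangeable, each of them has it with the same probability `p`.
Hence `(n + 1) p ≥ k ≥ (1 - α)(n + 1)`.
-/

open MeasureTheory ProbabilityTheory Finset
open scoped ENNReal

lemma card_filter_comp_perm_s15 {ι : Type*} [Fintype ι] (p : ι → Prop) [DecidablePred p]
    (e : Equiv.Perm ι) : #{i | p (e i)} = #{i | p i} :=
  card_equiv e (by simp)

section Rank

variable {α : Type*} [LinearOrder α]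

lemma le_sort_iff_card_filter_lt_le {m : ℕ} (v : Fin m → α) (l : Fin m) (t : α) :
    t ≤ (v ∘ Tuple.sort v) l ↔ #{i | v i < t} ≤ l := by
  have hmono := Tuple.monotone_sort v
  rw [← card_filter_comp_perm_s15 (v · < t) (Tuple.sort v)]
  constructor
  · intro ht
    calc #{i | v (Tuple.sort v i) < t} ≤ #(Iio l) := card_le_card fun j hj => by
          simp only [mem_filter, mem_univ, true_and] at hj
          exact mem_Iio.mpr (lt_of_not_ge fun hlj => (hj.trans_le ht).not_ge (hmono hlj))
      _ = l := Fin.card_Iio l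
  · intro hcard
    by_contra! hlt
    have : #(Iic l) ≤ #{i | v (Tuple.sort v i) < t} := card_le_card fun j hj => by
      simp only [mem_filter, mem_univ, true_and]
      exact (hmono (mem_Iic.mp hj)).trans_lt hlt
    rw [Fin.card_Iic] at this
    omega

lemma le_card_filter_card_filter_lt {m k : ℕ} (hk : k ≤ m) (v : Fin m → α) :
    k ≤ #{j | #{i | v i < v j} < k} := by
  set σ := Tuple.sort v
  have hrank (l : Fin k) : #{i | v i < v (σ (Fin.castLE hk l))} < k :=
    ((le_sort_iff_card_filter_lt_le v _ _).mp le_rfl).trans_lt l.isLt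
  simpa using card_le_card_of_injOn (s := univ) (σ ∘ Fin.castLE hk)
    (fun l _ => by simpa using hrank l) (σ.injective.comp (Fin.castLE_injective hk)).injOn

end Rank

lemma le_orderStat_iff {n k : ℕ} (hk1 : 1 ≤ k) (hkn : k ≤ n) (w : Fin n → ℝ) (t : ℝ) :
    t ≤ orderStat w k ↔ #{i | w i < t} < k := by
  rw [orderStat, dif_pos (by omega), le_sort_iff_card_filter_lt_le, Fin.val_mk]
  omega

section Exchangeable

variable {Ω ι : Type*} [MeasurableSpace Ω] [Fintype ι] {μ : Measure Ω}

lemma map_perm_eq_of_iIndepFun_of_identDistrib {β : Type*} [MeasurableSpace β]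
    [IsProbabilityMeasure μ] {X : ι → Ω → β} (hX : ∀ i, Measurable (X i))
    (hindep : iIndepFun X μ) {i₀ : ι} (hident : ∀ i, IdentDistrib (X i) (X i₀) μ μ)
    (e : Equiv.Perm ι) :
    μ.map (fun ω i => X (e i) ω) = μ.map (fun ω i => X i ω) := by
  rw [(iIndepFun_iff_map_fun_eq_pi_map fun i => (hX (e i)).aemeasurable).mp
      (hindep.precomp e.injective),
    (iIndepFun_iff_map_fun_eq_pi_map fun i => (hX i).aemeasurable).mp hindep]
  congr with i : 1
  rw [(hident (e i)).map_eq, (hident i).map_eq]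

lemma measurableSet_card_filter_lt (k : ℕ) (j : ι) :
    MeasurableSet {v : ι → ℝ | #{i | v i < v j} < k} := by
  have : Measurable fun v : ι → ℝ => #{i | v i < v j} := by
    simp only [card_filter]
    exact Finset.measurable_sum _ fun i _ => Measurable.ite
      (measurableSet_lt (measurable_pi_apply i) (measurable_pi_apply j))
      measurable_const measurable_const
  exact this measurableSet_Iio

lemma measure_card_filter_lt_perm {X : ι → Ω → ℝ} (hX : ∀ i, Measurable (X i))
    (hexch : ∀ e : Equiv.Perm ι, μ.map (fun ω i => X (e i) ω) = μ.map (fun ω i => X i ω))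
    (k : ℕ) (e : Equiv.Perm ι) (j : ι) :
    μ {ω | #{i | X i ω < X (e j) ω} < k} = μ {ω | #{i | X i ω < X j ω} < k} := by
  have hS := measurableSet_card_filter_lt k j
  have hXe : Measurable fun ω i => X (e i) ω := measurable_pi_lambda _ fun i => hX (e i)
  calc μ {ω | #{i | X i ω < X (e j) ω} < k}
      = μ ((fun ω i => X (e i) ω) ⁻¹' {v | #{i | v i < v j} < k}) := by
        congr with ω
        simp only [Set.mem_ofPred_eq, card_filter_comp_perm_s15 (X · ω < X (e j) ω)]
    _ = μ {ω | #{i | X i ω < X j ω} < k} := by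
        rw [← Measure.map_apply hXe hS, hexch, Measure.map_apply (measurable_pi_lambda _ hX) hS]
        rfl

lemma le_sum_measure_of_le_card_mem {E : ι → Set Ω} [∀ j, DecidablePred (· ∈ E j)]
    (hE : ∀ j, MeasurableSet (E j)) {k : ℕ} (hk : ∀ ω, k ≤ #{j | ω ∈ E j}) :
    (k : ℝ≥0∞) * μ Set.univ ≤ ∑ j, μ (E j) := by
  calc (k : ℝ≥0∞) * μ Set.univ = ∫⁻ _, (k : ℝ≥0∞) ∂μ := by simp
    _ ≤ ∫⁻ ω, ∑ j, (E j).indicator 1 ω ∂μ := lintegral_mono fun ω => by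
      simp only [Set.indicator_apply, Pi.one_apply, sum_boole]
      exact_mod_cast hk ω
    _ = ∑ j, μ (E j) := by
      rw [lintegral_finsetSum _ fun j _ => measurable_one.indicator (hE j)]
      simp [lintegral_indicator_one (hE _)]

lemma le_card_mul_measure_card_filter_lt {m k : ℕ} (hk : k ≤ m) {X : Fin m → Ω → ℝ}
    (hX : ∀ i, Measurable (X i))
    (hexch : ∀ e : Equiv.Perm (Fin m), μ.map (fun ω i => X (e i) ω) = μ.map (fun ω i => X i ω))
    (j : Fin m) :
    (k : ℝ≥0∞) * μ Set.univ ≤ m * μ {ω | #{i | X i ω < X j ω} < k} := by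
  have hE (j' : Fin m) : MeasurableSet {ω | #{i | X i ω < X j' ω} < k} :=
    measurable_pi_lambda _ hX (measurableSet_card_filter_lt k j')
  calc (k : ℝ≥0∞) * μ Set.univ ≤ ∑ j', μ {ω | #{i | X i ω < X j' ω} < k} :=
        le_sum_measure_of_le_card_mem hE fun ω => le_card_filter_card_filter_lt hk (X · ω)
    _ = ∑ _j' : Fin m, μ {ω | #{i | X i ω < X j ω} < k} := by
        refine sum_congr rfl fun j' _ => ?_
        simpa using measure_card_filter_lt_perm hX hexch k (Equiv.swap j j') j
    _ = m * μ {ω | #{i | X i ω < X j ω} < k} := by simp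

end Exchangeable

/-- Quantile-inflation coverage lower bound for i.i.d. variables: if `Z 1, …, Z (n+1)` are
i.i.d., `α ∈ (0,1)`, `k = ⌈(1-α)(n+1)⌉ ≤ n` and `Q̂` is the `k`-th smallest value among
`Z 1, …, Z n`, then `P(Z (n+1) ≤ Q̂) ≥ 1 - α`. -/
theorem prob_le_inflated_quantile_of_iid {Ω : Type*} [MeasurableSpace Ω]
    (μ : Measure Ω) [IsProbabilityMeasure μ] {n : ℕ}
    (Z : Fin (n + 1) → Ω → ℝ) (hmeas : ∀ i, Measurable (Z i))
    (hindep : iIndepFun Z μ)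
    (hident : ∀ i, IdentDistrib (Z i) (Z 0) μ μ)
    (α : ℝ) (hα : α ∈ Set.Ioo (0 : ℝ) 1)
    (hk : ⌈(1 - α) * ((n : ℝ) + 1)⌉₊ ≤ n) :
    ENNReal.ofReal (1 - α) ≤
      μ {ω | Z (Fin.last n) ω ≤
        orderStat (fun i : Fin n => Z i.castSucc ω) ⌈(1 - α) * ((n : ℝ) + 1)⌉₊} := by
  set k := ⌈(1 - α) * ((n : ℝ) + 1)⌉₊
  have hk1 : 1 ≤ k := Nat.one_le_iff_ne_zero.mpr (Nat.ceil_pos.mpr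
    (mul_pos (sub_pos.mpr hα.2) (by positivity))).ne'
  have hset : {ω | Z (Fin.last n) ω ≤ orderStat (fun i : Fin n => Z i.castSucc ω) k}
      = {ω | #{i | Z i ω < Z (Fin.last n) ω} < k} := by
    ext ω
    simp only [Set.mem_ofPred_eq, le_orderStat_iff hk1 hk, card_filter, Fin.sum_univ_castSucc,
      lt_irrefl, if_false, add_zero]
  have hcover := le_card_mul_measure_card_filter_lt (hk.trans n.le_succ) hmeas
    (map_perm_eq_of_iIndepFun_of_identDistrib hmeas hindep hident) (Fin.last n)
  rw [measure_univ, mul_one, ← hset] at hcover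
  have hceil : ENNReal.ofReal (1 - α) * (n + 1 : ℕ) ≤ k := by
    rw [← ENNReal.ofReal_natCast, ← ENNReal.ofReal_natCast,
      ← ENNReal.ofReal_mul (sub_nonneg.mpr hα.2.le)]
    exact ENNReal.ofReal_le_ofReal (by push_cast; exact Nat.le_ceil _)
  rw [mul_comm] at hceil
  exact (ENNReal.mul_le_mul_iff_right (by simp) (by simp)).mp (hceil.trans hcover)
end
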